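/- arXiv:2001.03040 — 5 statements merged into one kernel-verified Lean document; each statement's English description precedes it below -/
import Mathlib

section
/- Let ε > 0, let N, L, K ∈ ℕ+, let δ ∈ (0, 1/(3K)], let f ∈ C([0,1]^d), and let φ̃ : ℝ^d → ℝ be implemented by a ReLU FNN with width at most N and depth at most L. If |φ̃(x) − f(x)| ≤ ε for every x ∈ [0,1]^d \ Ω([0,1]^d, K, δ), then there exists a function φ : ℝ^d → ℝ implemented by a ReLU FNN with width at most 3^d·(N+4) and depth at most L + 2d such that |φ(x) − f(x)| ≤ ε + d·ω_f(δ) for every x ∈ [0,1]^d. -/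
open Real

noncomputable section

/-- `A` is an affine map from `ℝ^m` to `ℝ^n`. -/
def IsAffineMap (m n : ℕ) (A : (Fin m → ℝ) → (Fin n → ℝ)) : Prop :=
  ∃ (M : Matrix (Fin n) (Fin m) ℝ) (b : Fin n → ℝ), ∀ x, A x = M.mulVec x + b

/-- `φ : ℝ^d → ℝ` is realized by a ReLU network with exactly `L'` hidden layers,
each of positive width at most `W`. -/
def ReLUNetRec (W : ℝ) : ℕ → ∀ d : ℕ, ((Fin d → ℝ) → ℝ) → Prop
  | 0, d, φ => ∃ A : (Fin d → ℝ) → (Fin 1 → ℝ), IsAffineMap d 1 A ∧ ∀ x, φ x = A x 0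
  | L' + 1, d, φ => ∃ n : ℕ, 0 < n ∧ (n : ℝ) ≤ W ∧
      ∃ A : (Fin d → ℝ) → (Fin n → ℝ), IsAffineMap d n A ∧
        ∃ ψ : (Fin n → ℝ) → ℝ, ReLUNetRec W L' n ψ ∧
          ∀ x, φ x = ψ (fun i => max (A x i) 0)

/-- `φ : ℝ^d → ℝ` is implemented by a ReLU FNN with width at most `W` and depth at most `D`. -/
def ImplementedBy (d : ℕ) (W D : ℝ) (φ : (Fin d → ℝ) → ℝ) : Prop :=
  ∃ L' : ℕ, (L' : ℝ) ≤ D ∧ ReLUNetRec W L' d φ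

/-- one-dimensional-input version of `ImplementedBy`. -/
def ImplementedBy1 (W D : ℝ) (φ : ℝ → ℝ) : Prop :=
  ImplementedBy 1 W D (fun x => φ (x 0))

/-- two-dimensional-input version of `ImplementedBy`. -/
def ImplementedBy2 (W D : ℝ) (φ : ℝ → ℝ → ℝ) : Prop :=
  ImplementedBy 2 W D (fun x => φ (x 0) (x 1))

/-- the unit cube `[0,1]^d`. -/
def unitCube (d : ℕ) : Set (Fin d → ℝ) := Set.Icc 0 1

/-- the trifling region `Ω([0,1]^d, K, δ)`. -/
def trifling (d K : ℕ) (δ : ℝ) : Set (Fin d → ℝ) :=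
  {x | x ∈ unitCube d ∧ ∃ i : Fin d, ∃ k : ℕ, 1 ≤ k ∧ k ≤ K - 1 ∧
        x i ∈ Set.Ioo ((k : ℝ) / K - δ) ((k : ℝ) / K)}

/-- the modulus of continuity of `f` on `[0,1]^d` (w.r.t. the Euclidean norm). -/
def modCont (d : ℕ) (f : (Fin d → ℝ) → ℝ) (r : ℝ) : ℝ :=
  sSup {t | ∃ x ∈ unitCube d, ∃ y ∈ unitCube d,
        Real.sqrt (∑ i, (x i - y i) ^ 2) ≤ r ∧ t = |f x - f y|}

/-! Smooth the approximant one coordinate `e` at a time, replacing `g` by the median of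
`g (x - δ eₑ)`, `g x`, `g (x + δ eₑ)`. The bad intervals of the trifling region have length `δ`
and are at least `2 δ` apart, so two of the three points `xₑ - δ, xₑ, xₑ + δ` lie in `[0, 1]`
outside them; the median is within any error bound shared by two of its arguments, so each step
frees one coordinate from the trifling constraint at the cost of `ω_f(δ)`. The median of three
numbers is a ReLU network of depth 2 and width 6, so a step triples the width and adds two
layers. -/

namespace IsAffineMap

variable {d m n : ℕ}

lemma comp {A : (Fin m → ℝ) → (Fin n → ℝ)} {B : (Fin d → ℝ) → (Fin m → ℝ)}
    (hA : IsAffineMap m n A) (hB : IsAffineMap d m B) : IsAffineMap d n (A ∘ B) := by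
  obtain ⟨M, b, hM⟩ := hA
  obtain ⟨M', b', hM'⟩ := hB
  refine ⟨M * M', M.mulVec b' + b, fun x => ?_⟩
  rw [Function.comp_apply, hM, hM', Matrix.mulVec_add, Matrix.mulVec_mulVec, add_assoc]

lemma add_const (d : ℕ) (c : Fin d → ℝ) : IsAffineMap d d (· + c) :=
  ⟨1, c, fun x => by rw [Matrix.one_mulVec]⟩

lemma reindex (r : Fin n → Fin m) : IsAffineMap m n (fun z i => z (r i)) :=
  ⟨Matrix.of fun i j => if j = r i then 1 else 0, 0, fun z => by
    funext i; simp [Matrix.mulVec, dotProduct]⟩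

lemma glue {k : ℕ} {n' : Fin k → ℕ} {A : ∀ j, (Fin d → ℝ) → (Fin (n' j) → ℝ)}
    (hA : ∀ j, IsAffineMap d (n' j) (A j)) (r : Fin n → Σ j, Fin (n' j)) :
    IsAffineMap d n (fun x p => A (r p).1 x (r p).2) := by
  choose M b hM using hA
  refine ⟨Matrix.of fun p => M (r p).1 (r p).2, fun p => b (r p).1 (r p).2, fun x => ?_⟩
  funext p
  simp [hM, Matrix.mulVec]

end IsAffineMap

namespace ReLUNetRec

variable {W : ℝ}

lemma mono {W' : ℝ} (hW : W ≤ W') : ∀ {L' d : ℕ} {φ : (Fin d → ℝ) → ℝ},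
    ReLUNetRec W L' d φ → ReLUNetRec W' L' d φ
  | 0, _, _, h => h
  | _ + 1, _, _, ⟨n, hn, hnW, A, hA, ψ, hψ, hφ⟩ => ⟨n, hn, hnW.trans hW, A, hA, ψ, mono hW hψ, hφ⟩

lemma congr {L' d : ℕ} {φ φ' : (Fin d → ℝ) → ℝ} (hφ : ReLUNetRec W L' d φ)
    (h : ∀ x, φ x = φ' x) : ReLUNetRec W L' d φ' :=
  funext h ▸ hφ

lemma comp_affine : ∀ {L' d m : ℕ} {ψ : (Fin m → ℝ) → ℝ} {B : (Fin d → ℝ) → (Fin m → ℝ)},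
    ReLUNetRec W L' m ψ → IsAffineMap d m B → ReLUNetRec W L' d (ψ ∘ B)
  | 0, _, _, _, _, ⟨A, hA, hψ⟩, hB => ⟨A ∘ _, hA.comp hB, fun _ => hψ _⟩
  | _ + 1, _, _, _, _, ⟨n, hn, hnW, A, hA, χ, hχ, hψ⟩, hB =>
    ⟨n, hn, hnW, A ∘ _, hA.comp hB, χ, hχ, fun _ => hψ _⟩

/-- The output layers of the `ψ j` merge with the input layer of `g`, so no layer is added. -/
lemma comp_pi {W' : ℝ} {k L'' : ℕ} (hk : 0 < k) {g : (Fin k → ℝ) → ℝ}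
    (hg : ReLUNetRec W' L'' k g) : ∀ {L' d : ℕ} {ψ : Fin k → (Fin d → ℝ) → ℝ},
    (∀ j, ReLUNetRec W L' d (ψ j)) →
      ReLUNetRec (max (k * W) W') (L' + L'') d (fun x => g (fun j => ψ j x))
  | 0, d, ψ, hψ => by
    choose A hA hψA using hψ
    have hB := IsAffineMap.glue hA (fun j => ⟨j, 0⟩)
    rw [zero_add]
    refine ((comp_affine hg hB).mono (le_max_right (k * W) W')).congr fun x => ?_
    exact congrArg g (funext fun j => (hψA j x).symm)
  | L' + 1, d, ψ, hψ => by
    choose n hn hnW A hA χ hχ hψχ using hψ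
    set e : Fin (∑ j, n j) ≃ Σ j, Fin (n j) := finSigmaFinEquiv.symm
    have hχ' : ∀ j, ReLUNetRec W L' (∑ j, n j) (fun z => χ j (fun i => z (e.symm ⟨j, i⟩))) :=
      fun j => comp_affine (hχ j) (IsAffineMap.reindex _)
    rw [Nat.add_right_comm]
    refine ⟨∑ j, n j, ?_, ?_, _, IsAffineMap.glue hA e, _, comp_pi hk hg hχ',
      fun x => congrArg g (funext fun j => ?_)⟩
    · exact Finset.sum_pos (fun j _ => hn j) ⟨⟨0, hk⟩, Finset.mem_univ _⟩
    · calc ((∑ j, n j : ℕ) : ℝ) = ∑ j, (n j : ℝ) := by push_cast; rfl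
        _ ≤ ∑ _j : Fin k, W := Finset.sum_le_sum fun j _ => hnW j
        _ = k * W := by simp
        _ ≤ _ := le_max_left _ _
    · rw [hψχ]
      exact congrArg (χ j) (funext fun i =>
        congrArg (fun s => max (A s.1 x s.2) 0) (e.apply_symm_apply ⟨j, i⟩).symm)

end ReLUNetRec

def median3 (a b c : ℝ) : ℝ := max (min a b) (min (max a b) c)

lemma abs_median3_sub_le {a b c t E : ℝ}
    (h : (|a - t| ≤ E ∧ |b - t| ≤ E) ∨ (|b - t| ≤ E ∧ |c - t| ≤ E) ∨
      (|a - t| ≤ E ∧ |c - t| ≤ E)) : |median3 a b c - t| ≤ E := by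
  simp only [median3, abs_le, max_def, min_def] at h ⊢
  split_ifs <;> constructor <;> rcases h with h | h | h <;> linarith

/-- The median clamps `c` to the interval `[min a b, max a b]`, whose centre and radius are
`(a + b) / 2` and `|a - b| / 2`; `clamp y [-r, r] = (|y + r| - |y - r|) / 2`. -/
lemma median3_eq (a b c : ℝ) :
    median3 a b c = (a + b) / 2 + (|c - (a + b) / 2 + |a - b| / 2|
      - |c - (a + b) / 2 - |a - b| / 2|) / 2 := by
  simp only [median3, abs_eq_max_neg, max_def, min_def]
  split_ifs <;> linarith

-- A hidden value `t` is carried as the pair `max t 0, max (-t) 0`, from which the next layer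
-- reads off `t` and `|t|` linearly.
def medianLayer0 (z : Fin 3 → ℝ) : Fin 6 → ℝ :=
  ![z 0 - z 1, -(z 0 - z 1), z 2 - (z 0 + z 1) / 2, -(z 2 - (z 0 + z 1) / 2),
    (z 0 + z 1) / 2, -((z 0 + z 1) / 2)]

def medianLayer1 (h : Fin 6 → ℝ) : Fin 6 → ℝ :=
  ![(h 2 - h 3) + (h 0 + h 1) / 2, -((h 2 - h 3) + (h 0 + h 1) / 2),
    (h 2 - h 3) - (h 0 + h 1) / 2, -((h 2 - h 3) - (h 0 + h 1) / 2), h 4 - h 5, -(h 4 - h 5)]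

def medianLayer2 (g : Fin 6 → ℝ) : Fin 1 → ℝ :=
  ![(g 4 - g 5) + ((g 0 + g 1) - (g 2 + g 3)) / 2]

lemma isAffineMap_medianLayer0 : IsAffineMap 3 6 medianLayer0 := by
  refine ⟨!![1, -1, 0; -1, 1, 0; -1/2, -1/2, 1; 1/2, 1/2, -1; 1/2, 1/2, 0; -1/2, -1/2, 0], 0,
    fun z => ?_⟩
  funext i
  fin_cases i <;> simp [medianLayer0, dotProduct, Fin.sum_univ_succ] <;> ring

lemma isAffineMap_medianLayer1 : IsAffineMap 6 6 medianLayer1 := by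
  refine ⟨!![1/2, 1/2, 1, -1, 0, 0; -1/2, -1/2, -1, 1, 0, 0; -1/2, -1/2, 1, -1, 0, 0;
    1/2, 1/2, -1, 1, 0, 0; 0, 0, 0, 0, 1, -1; 0, 0, 0, 0, -1, 1], 0, fun h => ?_⟩
  funext i
  fin_cases i <;> simp [medianLayer1, dotProduct, Fin.sum_univ_succ] <;> ring

lemma isAffineMap_medianLayer2 : IsAffineMap 6 1 medianLayer2 := by
  refine ⟨!![1/2, 1/2, -1/2, -1/2, 1, -1], 0, fun g => ?_⟩
  funext i
  fin_cases i
  simp [medianLayer2, dotProduct, Fin.sum_univ_succ]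
  ring

lemma reluNetRec_median3 : ReLUNetRec 6 2 3 (fun z => median3 (z 0) (z 1) (z 2)) := by
  refine ⟨6, by norm_num, by norm_num, _, isAffineMap_medianLayer0, _,
    ⟨6, by norm_num, by norm_num, _, isAffineMap_medianLayer1, _,
      ⟨_, isAffineMap_medianLayer2, fun _ => rfl⟩, fun _ => rfl⟩, fun z => ?_⟩
  simp only [medianLayer0, medianLayer1, medianLayer2, Matrix.cons_val]
  simp only [max_zero_sub_max_neg_zero_eq_self, max_zero_add_max_neg_zero_eq_abs_self]
  rw [median3_eq]

def triflingCoord (K : ℕ) (δ : ℝ) : Set ℝ :=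
  {u | ∃ k : ℕ, 1 ≤ k ∧ k ≤ K - 1 ∧ u ∈ Set.Ioo ((k : ℝ) / K - δ) ((k : ℝ) / K)}

section TriflingCoord

variable {K : ℕ} {δ u v : ℝ}

lemma triflingCoord_bounds (hK : 0 < K) (hδ : 3 * δ ≤ 1 / K) (hu : u ∈ triflingCoord K δ) :
    2 * δ < u ∧ u < 1 - 3 * δ := by
  obtain ⟨k, hk1, hkK, hlo, hhi⟩ := hu
  have hKpos : (0 : ℝ) < K := by exact_mod_cast hK
  have hk1' : 1 / (K : ℝ) ≤ k / K := by gcongr; exact_mod_cast hk1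
  have hkK' : (k : ℝ) / K ≤ 1 - 1 / K := by
    rw [one_sub_div hKpos.ne', div_le_div_iff_of_pos_right hKpos, le_sub_iff_add_le]
    exact_mod_cast (by omega : k + 1 ≤ K)
  constructor <;> linarith

lemma triflingCoord_sub_lt_or_lt_sub (hK : 0 < K) (hδ : 3 * δ ≤ 1 / K)
    (hu : u ∈ triflingCoord K δ) (hv : v ∈ triflingCoord K δ) (huv : u ≤ v) :
    v - u < δ ∨ 2 * δ < v - u := by
  obtain ⟨k, -, -, hklo, hkhi⟩ := hu
  obtain ⟨l, -, -, hllo, hlhi⟩ := hv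
  have hKpos : (0 : ℝ) < K := by exact_mod_cast hK
  have step : ∀ {i j : ℕ}, i < j → (i : ℝ) / K + 1 / K ≤ j / K := fun hij => by
    rw [← add_div]; gcongr; exact_mod_cast hij
  rcases lt_trichotomy k l with hkl | rfl | hlk
  · have := step hkl; right; linarith
  · left; linarith
  · have := step hlk; linarith

lemma two_of_three_mem_Icc_diff_triflingCoord (hK : 0 < K) (hδ0 : 0 < δ) (hδ : 3 * δ ≤ 1 / K)
    {s : ℝ} (hs : s ∈ Set.Icc 0 1) :
    (s - δ ∈ Set.Icc 0 1 \ triflingCoord K δ ∧ s ∈ Set.Icc 0 1 \ triflingCoord K δ) ∨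
    (s ∈ Set.Icc 0 1 \ triflingCoord K δ ∧ s + δ ∈ Set.Icc 0 1 \ triflingCoord K δ) ∨
    (s - δ ∈ Set.Icc 0 1 \ triflingCoord K δ ∧ s + δ ∈ Set.Icc 0 1 \ triflingCoord K δ) := by
  have hδ3 : 3 * δ ≤ 1 := hδ.trans (div_le_one_of_le₀ (by exact_mod_cast hK) (Nat.cast_nonneg K))
  have bounds {u} : u ∈ triflingCoord K δ → 2 * δ < u ∧ u < 1 - 3 * δ :=
    triflingCoord_bounds hK hδ
  have gap {u v} (hu : u ∈ triflingCoord K δ) (hv : v ∈ triflingCoord K δ) (huv : u ≤ v) :=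
    triflingCoord_sub_lt_or_lt_sub hK hδ hu hv huv
  obtain ⟨hs0, hs1⟩ := hs
  simp only [Set.mem_sdiff, Set.mem_Icc]
  by_cases hleft : s < δ
  · exact Or.inr (Or.inl ⟨⟨⟨hs0, hs1⟩, fun h => by linarith [(bounds h).1]⟩,
      ⟨⟨by linarith, by linarith⟩, fun h => by linarith [(bounds h).1]⟩⟩)
  by_cases hright : 1 - δ < s
  · exact Or.inl ⟨⟨⟨by linarith, by linarith⟩, fun h => by linarith [(bounds h).2]⟩,
      ⟨⟨hs0, hs1⟩, fun h => by linarith [(bounds h).2]⟩⟩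
  push Not at hleft hright
  by_cases hlo : s - δ ∈ triflingCoord K δ
  · have hmid : s ∉ triflingCoord K δ := fun h => by
      rcases gap hlo h (by linarith) with h | h <;> linarith
    have hhi : s + δ ∉ triflingCoord K δ := fun h => by
      rcases gap hlo h (by linarith) with h | h <;> linarith
    exact Or.inr (Or.inl ⟨⟨⟨hs0, hs1⟩, hmid⟩, ⟨⟨by linarith, by linarith⟩, hhi⟩⟩)
  by_cases hmid : s ∈ triflingCoord K δ
  · have hhi : s + δ ∉ triflingCoord K δ := fun h => by
      rcases gap hmid h (by linarith) with h | h <;> linarith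
    exact Or.inr (Or.inr ⟨⟨⟨by linarith, by linarith⟩, hlo⟩, ⟨⟨by linarith, by linarith⟩, hhi⟩⟩)
  exact Or.inl ⟨⟨⟨by linarith, by linarith⟩, hlo⟩, ⟨⟨hs0, hs1⟩, hmid⟩⟩

end TriflingCoord

lemma mem_unitCube_iff {d : ℕ} {x : Fin d → ℝ} : x ∈ unitCube d ↔ ∀ i, x i ∈ Set.Icc 0 1 := by
  simp only [unitCube, Set.mem_Icc, Pi.le_def, forall_and, Pi.zero_apply, Pi.one_apply]

lemma abs_sub_le_modCont {d : ℕ} {f : (Fin d → ℝ) → ℝ} (hf : ContinuousOn f (unitCube d))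
    {x y : Fin d → ℝ} (hx : x ∈ unitCube d) (hy : y ∈ unitCube d) {r : ℝ}
    (hxy : Real.sqrt (∑ i, (x i - y i) ^ 2) ≤ r) : |f x - f y| ≤ modCont d f r := by
  obtain ⟨C, hC⟩ := isCompact_Icc.exists_bound_of_continuousOn hf
  simp only [Real.norm_eq_abs] at hC
  refine le_csSup ⟨2 * C, ?_⟩ ⟨x, hx, y, hy, hxy, rfl⟩
  rintro _ ⟨x', hx', y', hy', -, rfl⟩
  linarith [abs_sub (f x') (f y'), hC x' hx', hC y' hy']

lemma sqrt_sum_sq_sub_eq_abs_of_eq_of_ne {d : ℕ} {x y : Fin d → ℝ} (e : Fin d)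
    (hxy : ∀ j ≠ e, x j = y j) : Real.sqrt (∑ i, (x i - y i) ^ 2) = |x e - y e| := by
  rw [Finset.sum_eq_single e (fun j _ hj => by rw [hxy j hj, sub_self, sq, zero_mul])
    (fun h => absurd (Finset.mem_univ e) h), Real.sqrt_sq_eq_abs]

def smoothAlong {d : ℕ} (δ : ℝ) (e : Fin d) (g : (Fin d → ℝ) → ℝ) (x : Fin d → ℝ) : ℝ :=
  median3 (g (x - Pi.single e δ)) (g x) (g (x + Pi.single e δ))

lemma reluNetRec_smoothAlong {W : ℝ} {L' d : ℕ} {g : (Fin d → ℝ) → ℝ} (hg : ReLUNetRec W L' d g)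
    (δ : ℝ) (e : Fin d) : ReLUNetRec (max (3 * W) 6) (L' + 2) d (smoothAlong δ e g) := by
  have hshift (c : Fin d → ℝ) : ReLUNetRec W L' d (g ∘ (· + c)) :=
    hg.comp_affine (IsAffineMap.add_const d c)
  have hψ :
      ∀ j, ReLUNetRec W L' d (![g ∘ (· + -Pi.single e δ), g, g ∘ (· + Pi.single e δ)] j) := by
    intro j; fin_cases j
    exacts [hshift _, hg, hshift _]
  convert ReLUNetRec.comp_pi (by norm_num) reluNetRec_median3 hψ using 2 with x
  · norm_num
  · simp [smoothAlong, sub_eq_add_neg]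

section Smoothing

variable {d K : ℕ} {δ E : ℝ} {f g : (Fin d → ℝ) → ℝ}

lemma abs_smoothAlong_sub_le (hK : 0 < K) (hδ0 : 0 < δ) (hδ : 3 * δ ≤ 1 / K)
    (hf : ContinuousOn f (unitCube d)) {S : Set (Fin d)}
    (hg : ∀ x ∈ unitCube d, (∀ j ∉ S, x j ∉ triflingCoord K δ) → |g x - f x| ≤ E) (e : Fin d) :
    ∀ x ∈ unitCube d, (∀ j ∉ insert e S, x j ∉ triflingCoord K δ) →
      |smoothAlong δ e g x - f x| ≤ E + modCont d f δ := by
  intro x hx hxS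
  have near {y : Fin d → ℝ} (hyx : ∀ j ≠ e, y j = x j) (hye : |y e - x e| ≤ δ)
      (hy : y e ∈ Set.Icc 0 1 \ triflingCoord K δ) : |g y - f x| ≤ E + modCont d f δ := by
    have hyc : y ∈ unitCube d := mem_unitCube_iff.2 fun j => by
      rcases eq_or_ne j e with rfl | hj
      exacts [hy.1, hyx j hj ▸ mem_unitCube_iff.1 hx j]
    have hgy : |g y - f y| ≤ E := hg y hyc fun j hj => by
      rcases eq_or_ne j e with rfl | hje
      exacts [hy.2, hyx j hje ▸ hxS j (by simp [hj, hje])]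
    have hfy : |f y - f x| ≤ modCont d f δ :=
      abs_sub_le_modCont hf hyc hx ((sqrt_sum_sq_sub_eq_abs_of_eq_of_ne e hyx).trans_le hye)
    calc |g y - f x| ≤ |g y - f y| + |f y - f x| := abs_sub_le _ _ _
      _ ≤ E + modCont d f δ := add_le_add hgy hfy
  have hminus := @near (x - Pi.single e δ) (fun j hj => by simp [hj]) (by simp [abs_of_pos hδ0])
  have hzero := @near x (fun _ _ => rfl) (by simp [hδ0.le])
  have hplus := @near (x + Pi.single e δ) (fun j hj => by simp [hj]) (by simp [abs_of_pos hδ0])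
  simp only [Pi.sub_apply, Pi.add_apply, Pi.single_eq_same] at hminus hplus
  exact abs_median3_sub_le <| (two_of_three_mem_Icc_diff_triflingCoord hK hδ0 hδ
    (mem_unitCube_iff.1 hx e)).imp (And.imp hminus hzero) <| Or.imp (And.imp hzero hplus)
      (And.imp hminus hplus)

lemma reluNetRec_foldr_smoothAlong {W : ℝ} (hW : 2 ≤ W) {L' d : ℕ} {g : (Fin d → ℝ) → ℝ}
    (hg : ReLUNetRec W L' d g) (δ : ℝ) : ∀ l : List (Fin d),
    ReLUNetRec (3 ^ l.length * W) (L' + 2 * l.length) d (l.foldr (smoothAlong δ) g)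
  | [] => by simpa using hg
  | e :: l => by
    have hwidth : max (3 * (3 ^ l.length * W)) 6 ≤ 3 ^ (e :: l).length * W := by
      rw [List.length_cons, pow_succ]
      refine max_le (le_of_eq (by ring)) ?_
      nlinarith [one_le_pow₀ (M₀ := ℝ) (n := l.length) (by norm_num : (1 : ℝ) ≤ 3)]
    exact (reluNetRec_smoothAlong (reluNetRec_foldr_smoothAlong hW hg δ l) δ e).mono hwidth

lemma abs_foldr_smoothAlong_sub_le (hK : 0 < K) (hδ0 : 0 < δ) (hδ : 3 * δ ≤ 1 / K)
    (hf : ContinuousOn f (unitCube d))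
    (hg : ∀ x ∈ unitCube d, (∀ j, x j ∉ triflingCoord K δ) → |g x - f x| ≤ E) :
    ∀ l : List (Fin d), ∀ x ∈ unitCube d, (∀ j ∉ l, x j ∉ triflingCoord K δ) →
      |l.foldr (smoothAlong δ) g x - f x| ≤ E + l.length * modCont d f δ
  | [] => by simpa using hg
  | e :: l => by
    have := abs_smoothAlong_sub_le hK hδ0 hδ hf (S := {j | j ∈ l})
      (abs_foldr_smoothAlong_sub_le hK hδ0 hδ hf hg l) e
    simpa [add_mul, add_assoc, add_comm (modCont d f δ)] using this

end Smoothing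

theorem relu_approx_remove_trifling_general
    (d : ℕ) (ε : ℝ)
    (N L K : ℕ) (hK : 0 < K)
    (δ : ℝ) (hδ0 : 0 < δ) (hδ1 : δ ≤ 1 / (3 * K))
    (f : (Fin d → ℝ) → ℝ) (hf : ContinuousOn f (unitCube d))
    (φt : (Fin d → ℝ) → ℝ) (hφt : ImplementedBy d (N : ℝ) (L : ℝ) φt)
    (happrox : ∀ x ∈ unitCube d \ trifling d K δ, |φt x - f x| ≤ ε) :
    ∃ φ : (Fin d → ℝ) → ℝ,
      ImplementedBy d (3 ^ d * ((N : ℝ) + 4)) ((L : ℝ) + 2 * d) φ ∧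
      ∀ x ∈ unitCube d, |φ x - f x| ≤ ε + d * modCont d f δ := by
  obtain ⟨L', hL', hφt⟩ := hφt
  have hδ : 3 * δ ≤ 1 / K := by
    calc 3 * δ ≤ 3 * (1 / (3 * K)) := by gcongr
      _ = 1 / K := by ring
  have hgood : ∀ x ∈ unitCube d, (∀ j, x j ∉ triflingCoord K δ) → |φt x - f x| ≤ ε :=
    fun x hx hxgood => happrox x ⟨hx, fun ⟨_, j, hj⟩ => hxgood j hj⟩
  refine ⟨(List.finRange d).foldr (smoothAlong δ) φt, ⟨L' + 2 * d, by push_cast; linarith, ?_⟩,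
    fun x hx => ?_⟩
  · have hnet := reluNetRec_foldr_smoothAlong (by linarith [N.cast_nonneg (α := ℝ)])
      (hφt.mono (by linarith : (N : ℝ) ≤ N + 4)) δ (List.finRange d)
    rwa [List.length_finRange] at hnet
  · simpa using abs_foldr_smoothAlong_sub_le hK hδ0 hδ hf hgood (List.finRange d) x hx
      (by simp)

/-- Theorem 2.1: a good approximation outside the trifling region can be upgraded
to a good uniform approximation on all of `[0,1]^d` by a slightly larger network. -/
theorem relu_approx_remove_trifling
    (d : ℕ) (hd : 0 < d) (ε : ℝ) (hε : 0 < ε)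
    (N L K : ℕ) (hN : 0 < N) (hL : 0 < L) (hK : 0 < K)
    (δ : ℝ) (hδ0 : 0 < δ) (hδ1 : δ ≤ 1 / (3 * K))
    (f : (Fin d → ℝ) → ℝ) (hf : ContinuousOn f (unitCube d))
    (φt : (Fin d → ℝ) → ℝ) (hφt : ImplementedBy d (N : ℝ) (L : ℝ) φt)
    (happrox : ∀ x ∈ unitCube d \ trifling d K δ, |φt x - f x| ≤ ε) :
    ∃ φ : (Fin d → ℝ) → ℝ,
      ImplementedBy d (3 ^ d * ((N : ℝ) + 4)) ((L : ℝ) + 2 * d) φ ∧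
      ∀ x ∈ unitCube d, |φ x - f x| ≤ ε + d * modCont d f δ :=
  relu_approx_remove_trifling_general d ε N L K hK δ hδ0 hδ1 f hf φt hφt happrox
end
end

section
/- Let d, k ∈ ℕ+, let α ∈ ℕ^d with ‖α‖_1 ≤ k, and let P(x) = x^α = x_1^{α_1} x_2^{α_2} ⋯ x_d^{α_d}. Then for any N, L ∈ ℕ+ there exists a function φ : ℝ^d → ℝ implemented by a ReLU FNN with width at most 9(N+1) + k − 1 and depth at most 7k²L such that |φ(x) − P(x)| ≤ 9k·(N+1)^{−7kL} for every x ∈ [0,1]^d. -/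
/-!
On `[0, 1]`, let `g` be the sawtooth with `n` teeth and `E` the piecewise linear interpolant of
`t - t²` on the grid `ℤ / n`. The interpolation error of `t - t²` is `(g - g²) / n²`, so
`t - ∑_{i<s} n^(-2i) E(gⁱ t)` differs from `t²` by `n^(-2s) (u - u²)` with `u = gˢ t`, at most
`n^(-2s) / 4`. Both `g` and `E` are combinations of the ReLUs `max (t - i/n) 0`, so a network of
width `O(n)` adds one term per layer. Products follow by polarization,
`ab = 2 ((a + b)/2)² - a²/2 - b²/2`; clamping to `[0, 1]` after each multiplication keeps the
errors additive along the factors of `x^α`, padded with ones to `k + 1` of them. Then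
`n = N + 1` and `s = 4kL + 1` give the stated width, depth and error.
-/

open Real

noncomputable section

open Finset

def affineFunctions (ι : Type) [Fintype ι] : Submodule ℝ ((ι → ℝ) → ℝ) where
  carrier := {f | ∃ (c : ι → ℝ) (b : ℝ), ∀ x, f x = ∑ a, c a * x a + b}
  zero_mem' := ⟨0, 0, fun x => by simp⟩
  add_mem' := by
    rintro f g ⟨c, b, hf⟩ ⟨c', b', hg⟩
    refine ⟨c + c', b + b', fun x => ?_⟩
    simp only [Pi.add_apply, hf, hg, add_mul, sum_add_distrib]
    ring
  smul_mem' := by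
    rintro r f ⟨c, b, hf⟩
    refine ⟨r • c, r * b, fun x => ?_⟩
    simp only [Pi.smul_apply, smul_eq_mul, hf, mul_add, mul_sum, mul_assoc]

namespace affineFunctions

variable {ι κ : Type} [Fintype ι] [Fintype κ]

theorem const_mem (b : ℝ) : (fun _ => b : (ι → ℝ) → ℝ) ∈ affineFunctions ι :=
  ⟨0, b, fun x => by simp⟩

theorem eval_mem (a : ι) : (fun x : ι → ℝ => x a) ∈ affineFunctions ι := by
  classical
  exact ⟨Pi.single a 1, 0, fun x => by simp [Pi.single_apply]⟩

theorem comp_mem {f : (κ → ℝ) → ℝ} (hf : f ∈ affineFunctions κ) {g : (ι → ℝ) → κ → ℝ}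
    (hg : ∀ j, (fun x => g x j) ∈ affineFunctions ι) :
    (fun x => f (g x)) ∈ affineFunctions ι := by
  obtain ⟨c, b, hf⟩ := hf
  have hfg : (fun x => f (g x)) = (∑ j, c j • fun x => g x j) + fun _ => b := by
    funext x
    simp [hf]
  rw [hfg]
  exact add_mem (sum_mem fun j _ => Submodule.smul_mem _ _ (hg j)) (const_mem b)

end affineFunctions

open affineFunctions

theorem isAffineMap_of_forall_mem {m p : ℕ} {A : (Fin m → ℝ) → Fin p → ℝ}
    (h : ∀ i, (fun x => A x i) ∈ affineFunctions (Fin m)) : IsAffineMap m p A := by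
  choose c b hc using h
  exact ⟨Matrix.of c, b, fun x => funext fun i => by simp [Matrix.mulVec, dotProduct, hc]⟩

theorem IsAffineMap.apply_mem {m p : ℕ} {A : (Fin m → ℝ) → Fin p → ℝ} (hA : IsAffineMap m p A)
    (i : Fin p) : (fun x => A x i) ∈ affineFunctions (Fin m) := by
  obtain ⟨M, b, hA⟩ := hA
  exact ⟨M i, b i, fun x => by simp [hA, Matrix.mulVec, dotProduct]⟩

theorem ReLUNetRec.mono_s5 {W W' : ℝ} (hW : W ≤ W') :
    ∀ {L d : ℕ} {φ : (Fin d → ℝ) → ℝ}, ReLUNetRec W L d φ → ReLUNetRec W' L d φ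
  | 0, _, _, h => h
  | _ + 1, _, _, ⟨n, hn, hnW, A, hA, ψ, hψ, hφ⟩ => ⟨n, hn, hnW.trans hW, A, hA, ψ, hψ.mono_s5 hW, hφ⟩

theorem ReLUNetRec.comp_affine_s5 {W : ℝ} {L m d : ℕ} {ψ : (Fin m → ℝ) → ℝ}
    (hψ : ReLUNetRec W L m ψ) {B : (Fin d → ℝ) → Fin m → ℝ} (hB : IsAffineMap d m B) :
    ReLUNetRec W L d (fun x => ψ (B x)) := by
  cases L with
  | zero =>
    obtain ⟨A, hA, hψ⟩ := hψ
    exact ⟨fun x => A (B x), isAffineMap_of_forall_mem fun i => comp_mem (hA.apply_mem i)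
      hB.apply_mem, fun x => hψ (B x)⟩
  | succ L =>
    obtain ⟨n, hn, hnW, A, hA, ψ', hψ', hψ⟩ := hψ
    exact ⟨n, hn, hnW, fun x => A (B x), isAffineMap_of_forall_mem fun i =>
      comp_mem (hA.apply_mem i) hB.apply_mem, ψ', hψ', fun x => hψ (B x)⟩

theorem ImplementedBy.mono_s5 {d : ℕ} {W W' D D' : ℝ} {φ : (Fin d → ℝ) → ℝ}
    (h : ImplementedBy d W D φ) (hW : W ≤ W') (hD : D ≤ D') : ImplementedBy d W' D' φ :=
  let ⟨L, hL, hφ⟩ := h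
  ⟨L, hL.trans hD, hφ.mono_s5 hW⟩

theorem ImplementedBy.comp_affine_s5 {m d : ℕ} {W D : ℝ} {ψ : (Fin m → ℝ) → ℝ}
    (h : ImplementedBy m W D ψ) {B : (Fin d → ℝ) → Fin m → ℝ} (hB : IsAffineMap d m B) :
    ImplementedBy d W D (fun x => ψ (B x)) :=
  let ⟨L, hL, hψ⟩ := h
  ⟨L, hL, hψ.comp_affine_s5 hB⟩

def reluLayer {α ι : Type} (A : α → ι → ℝ) (v : α) : ι → ℝ := fun a => max (A v a) 0

theorem reluNetRec_comp_reluLayer {ι : Type} [Fintype ι] [Nonempty ι] {W : ℝ}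
    (hW : (Fintype.card ι : ℝ) ≤ W) {T d : ℕ} {A : (Fin d → ℝ) → ι → ℝ}
    (hA : ∀ a, (fun x => A x a) ∈ affineFunctions (Fin d)) {ψ : (ι → ℝ) → ℝ}
    (hψ : ReLUNetRec W T (Fintype.card ι) (fun v => ψ (fun a => v (Fintype.equivFin ι a)))) :
    ReLUNetRec W (T + 1) d (fun x => ψ (reluLayer A x)) :=
  ⟨_, Fintype.card_pos, hW, fun x j => A x ((Fintype.equivFin ι).symm j),
    isAffineMap_of_forall_mem fun j => hA _, _, hψ, fun x => by simp; rfl⟩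

inductive ReLUStack (ι : Type) [Fintype ι] : ℕ → ((ι → ℝ) → ι → ℝ) → Prop
  | id : ReLUStack ι 0 id
  | cons {T : ℕ} {F : (ι → ℝ) → ι → ℝ} {A : (ι → ℝ) → ι → ℝ}
      (hA : ∀ a, (fun v => A v a) ∈ affineFunctions ι) (hF : ReLUStack ι T F) :
      ReLUStack ι (T + 1) (F ∘ reluLayer A)

namespace ReLUStack

variable {ι : Type} [Fintype ι]

theorem comp {T₁ T₂ : ℕ} {F₁ F₂ : (ι → ℝ) → ι → ℝ} (h₁ : ReLUStack ι T₁ F₁)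
    (h₂ : ReLUStack ι T₂ F₂) : ReLUStack ι (T₂ + T₁) (F₂ ∘ F₁) := by
  induction h₁ with
  | id => exact h₂
  | cons hA _ ih => exact ih.cons hA

theorem snoc {T : ℕ} {F : (ι → ℝ) → ι → ℝ} (hF : ReLUStack ι T F) {A : (ι → ℝ) → ι → ℝ}
    (hA : ∀ a, (fun v => A v a) ∈ affineFunctions ι) :
    ReLUStack ι (T + 1) (reluLayer A ∘ F) := by
  rw [Nat.add_comm]
  exact hF.comp (id.cons hA)

theorem reluNetRec [Nonempty ι] {W : ℝ} (hW : (Fintype.card ι : ℝ) ≤ W) {T : ℕ}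
    {F : (ι → ℝ) → ι → ℝ} (hF : ReLUStack ι T F) {C : (ι → ℝ) → ℝ}
    (hC : C ∈ affineFunctions ι) {d : ℕ} {A : (Fin d → ℝ) → ι → ℝ}
    (hA : ∀ a, (fun x => A x a) ∈ affineFunctions (Fin d)) :
    ReLUNetRec W (T + 1) d (fun x => C (F (reluLayer A x))) := by
  induction hF generalizing d with
  | id =>
    refine reluNetRec_comp_reluLayer hW hA ⟨fun v _ => C (fun a => v (Fintype.equivFin ι a)),
      isAffineMap_of_forall_mem fun _ => comp_mem hC fun a => eval_mem _, fun v => rfl⟩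
  | @cons T F A' hA' _ ih =>
    exact reluNetRec_comp_reluLayer (ψ := fun v => C (F (reluLayer A' v))) hW hA
      (ih (A := fun v => A' fun b => v (Fintype.equivFin ι b))
        fun a => comp_mem (hA' a) fun b => eval_mem _)

end ReLUStack

def knotSum (n : ℕ) (c : ℕ → ℝ) (t : ℝ) : ℝ := ∑ i ∈ range n, c i * max (t - i / n) 0

theorem knotSum_eq_of_mem {n j : ℕ} (c : ℕ → ℝ) (hj : j < n) {t : ℝ} (h₁ : (j : ℝ) / n ≤ t)
    (h₂ : t ≤ ((j : ℝ) + 1) / n) : knotSum n c t = ∑ i ∈ range (j + 1), c i * (t - i / n) := by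
  rw [knotSum, ← sum_subset (range_subset_range.mpr hj)]
  · refine sum_congr rfl fun i hi => ?_
    have hij : (i : ℝ) ≤ j := by exact_mod_cast Nat.lt_succ_iff.mp (mem_range.mp hi)
    have : (i : ℝ) / n ≤ t := le_trans (by gcongr) h₁
    rw [max_eq_left (by linarith)]
  · intro i _ hi
    have hij : (j : ℝ) + 1 ≤ i := by exact_mod_cast not_lt.mp (mt mem_range.mpr hi)
    have : t ≤ (i : ℝ) / n := le_trans h₂ (by gcongr)
    rw [max_eq_right (by linarith), mul_zero]

theorem exists_knot_interval {n : ℕ} (hn : 0 < n) {t : ℝ} (ht : t ∈ Set.Icc (0 : ℝ) 1) :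
    ∃ j < n, (j : ℝ) / n ≤ t ∧ t ≤ ((j : ℝ) + 1) / n := by
  have hn' : (0 : ℝ) < n := by exact_mod_cast hn
  rcases ht.2.eq_or_lt with rfl | ht₁
  · refine ⟨n - 1, by omega, ?_, ?_⟩ <;> rw [Nat.cast_pred hn]
    · rw [div_le_one hn']; linarith
    · simp [hn'.ne']
  · have hnt : 0 ≤ (n : ℝ) * t := mul_nonneg hn'.le ht.1
    refine ⟨⌊(n : ℝ) * t⌋₊, (Nat.floor_lt hnt).mpr (by nlinarith), ?_, ?_⟩
    · rw [div_le_iff₀ hn', mul_comm t]; exact Nat.floor_le hnt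
    · rw [le_div_iff₀ hn', mul_comm t]; exact (Nat.lt_floor_add_one _).le

def zigzagCoeff (n i : ℕ) : ℝ := if i = 0 then n else (-1) ^ i * (2 * n)

def sqCorrectionCoeff (n i : ℕ) : ℝ := if i = 0 then ((n : ℝ) - 1) / n else -2 / n

/-- The sawtooth of `n` teeth mapping each `[j/n, (j+1)/n]` linearly onto `[0, 1]`. -/
def zigzag (n : ℕ) : ℝ → ℝ := knotSum n (zigzagCoeff n)

/-- The piecewise linear interpolant of `t ↦ t - t²` at the knots `i / n`. -/
def sqCorrection (n : ℕ) : ℝ → ℝ := knotSum n (sqCorrectionCoeff n)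

section Pieces

variable {n : ℕ} (hn : (n : ℝ) ≠ 0) (t : ℝ)
include hn

theorem sum_zigzagCoeff_mul (j : ℕ) :
    ∑ i ∈ range (j + 1), zigzagCoeff n i * (t - i / n) =
      if Even j then n * t - j else j + 1 - n * t := by
  induction j with
  | zero => simp [zigzagCoeff]
  | succ j ih =>
    rw [sum_range_succ, ih, zigzagCoeff, if_neg j.succ_ne_zero]
    rcases Nat.even_or_odd j with h | h
    · simp only [h, h.add_one.neg_one_pow, Nat.not_even_iff_odd.mpr h.add_one, if_true, if_false]
      push_cast
      field_simp
      ring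
    · simp only [Nat.not_even_iff_odd.mpr h, h.add_one.neg_one_pow, h.add_one, if_true, if_false]
      push_cast
      field_simp
      ring

theorem sum_sqCorrectionCoeff_mul (j : ℕ) :
    ∑ i ∈ range (j + 1), sqCorrectionCoeff n i * (t - i / n) =
      ((n : ℝ) - 1 - 2 * j) * t / n + j * (j + 1) / n ^ 2 := by
  induction j with
  | zero => simp [sqCorrectionCoeff]; ring
  | succ j ih =>
    rw [sum_range_succ, ih, sqCorrectionCoeff, if_neg j.succ_ne_zero]
    push_cast
    field_simp
    ring

end Pieces

section Zigzag

variable {n : ℕ} (hn : 0 < n)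
include hn

theorem mapsTo_zigzag : Set.MapsTo (zigzag n) (Set.Icc 0 1) (Set.Icc 0 1) := by
  intro t ht
  have hn' : (0 : ℝ) < n := by exact_mod_cast hn
  obtain ⟨j, hj, h₁, h₂⟩ := exists_knot_interval hn ht
  rw [zigzag, knotSum_eq_of_mem _ hj h₁ h₂, sum_zigzagCoeff_mul hn'.ne']
  rw [div_le_iff₀ hn'] at h₁
  rw [le_div_iff₀ hn'] at h₂
  split_ifs <;> constructor <;> linarith

theorem sqCorrection_nonneg {t : ℝ} (ht : t ∈ Set.Icc (0 : ℝ) 1) : 0 ≤ sqCorrection n t := by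
  have hn' : (0 : ℝ) < n := by exact_mod_cast hn
  obtain ⟨j, hj, h₁, h₂⟩ := exists_knot_interval hn ht
  rw [sqCorrection, knotSum_eq_of_mem _ hj h₁ h₂, sum_sqCorrectionCoeff_mul hn'.ne']
  rw [div_le_iff₀ hn'] at h₁
  rw [le_div_iff₀ hn'] at h₂
  have hj' : (j : ℝ) + 1 ≤ n := by exact_mod_cast hj
  have hj₀ : (0 : ℝ) ≤ j := j.cast_nonneg
  -- linear in `nt ∈ [j, j + 1]`, with values `j (n - j)` and `(j + 1) (n - 1 - j)` at the ends
  have key : 0 ≤ ((n : ℝ) - 1 - 2 * j) * (t * n) + j * (j + 1) := by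
    rcases le_total ((n : ℝ) - 1 - 2 * j) 0 with h | h <;> nlinarith
  have : ((n : ℝ) - 1 - 2 * j) * t / n + j * (j + 1) / n ^ 2 =
      (((n : ℝ) - 1 - 2 * j) * (t * n) + j * (j + 1)) / n ^ 2 := by
    field_simp
  rw [this]
  positivity

/-- The interpolation error of `t - t²` is a copy of `t - t²` rescaled on each piece. -/
theorem sqCorrection_eq {t : ℝ} (ht : t ∈ Set.Icc (0 : ℝ) 1) :
    sqCorrection n t = t - t ^ 2 - (zigzag n t - zigzag n t ^ 2) / (n : ℝ) ^ 2 := by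
  have hn' : (0 : ℝ) < n := by exact_mod_cast hn
  obtain ⟨j, hj, h₁, h₂⟩ := exists_knot_interval hn ht
  rw [sqCorrection, zigzag, knotSum_eq_of_mem _ hj h₁ h₂, knotSum_eq_of_mem _ hj h₁ h₂,
    sum_sqCorrectionCoeff_mul hn'.ne', sum_zigzagCoeff_mul hn'.ne']
  split_ifs <;> field_simp <;> ring

end Zigzag

def sqApprox (n s : ℕ) (t : ℝ) : ℝ :=
  t - ∑ i ∈ range s, ((n : ℝ) ^ 2)⁻¹ ^ i * sqCorrection n ((zigzag n)^[i] t)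

theorem sqApprox_zero (n : ℕ) (t : ℝ) : sqApprox n 0 t = t := by
  simp [sqApprox]

theorem sqApprox_succ (n s : ℕ) (t : ℝ) :
    sqApprox n (s + 1) t =
      sqApprox n s t - ((n : ℝ) ^ 2)⁻¹ ^ s * sqCorrection n ((zigzag n)^[s] t) := by
  rw [sqApprox, sqApprox, sum_range_succ]
  ring

section SqApprox

variable {n : ℕ} (hn : 0 < n) {t : ℝ} (ht : t ∈ Set.Icc (0 : ℝ) 1)
include hn ht

theorem sqApprox_sub_sq (s : ℕ) :
    sqApprox n s t - t ^ 2 = ((n : ℝ) ^ 2)⁻¹ ^ s * ((zigzag n)^[s] t - ((zigzag n)^[s] t) ^ 2) := by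
  induction s with
  | zero => simp [sqApprox_zero]
  | succ s ih =>
    rw [sqApprox_succ, Function.iterate_succ_apply',
      sqCorrection_eq hn ((mapsTo_zigzag hn).iterate s ht)]
    linear_combination ih

theorem sq_le_sqApprox (s : ℕ) : t ^ 2 ≤ sqApprox n s t := by
  have hu := (mapsTo_zigzag hn).iterate s ht
  rw [← sub_nonneg, sqApprox_sub_sq hn ht]
  exact mul_nonneg (by positivity) (by nlinarith [hu.1, hu.2])

theorem abs_sqApprox_sub_sq_le (s : ℕ) : |sqApprox n s t - t ^ 2| ≤ ((n : ℝ) ^ 2)⁻¹ ^ s / 4 := by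
  have hu := (mapsTo_zigzag hn).iterate s ht
  rw [sqApprox_sub_sq hn ht, abs_mul, abs_of_nonneg (by positivity), div_eq_mul_inv]
  gcongr
  rw [abs_le]
  constructor <;> nlinarith [hu.1, hu.2, sq_nonneg ((zigzag n)^[s] t - 1 / 2)]

end SqApprox

/-- Multiplication by polarization, `ab = 2((a + b)/2)² - a²/2 - b²/2`, with `F` for squaring. -/
def polarMul (F : ℝ → ℝ) (a b : ℝ) : ℝ := 2 * F ((a + b) / 2) - F a / 2 - F b / 2

theorem abs_polarMul_sub_mul_le {F : ℝ → ℝ} {δ : ℝ}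
    (hF : ∀ t ∈ Set.Icc (0 : ℝ) 1, |F t - t ^ 2| ≤ δ) {a b : ℝ} (ha : a ∈ Set.Icc (0 : ℝ) 1)
    (hb : b ∈ Set.Icc (0 : ℝ) 1) : |polarMul F a b - a * b| ≤ 3 * δ := by
  have hab : (a + b) / 2 ∈ Set.Icc (0 : ℝ) 1 := ⟨by linarith [ha.1, hb.1], by linarith [ha.2, hb.2]⟩
  have e₁ := abs_le.mp (hF _ hab)
  have e₂ := abs_le.mp (hF a ha)
  have e₃ := abs_le.mp (hF b hb)
  rw [polarMul, abs_le]
  constructor <;> nlinarith [e₁.1, e₁.2, e₂.1, e₂.2, e₃.1, e₃.2]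

def clamp01 (z : ℝ) : ℝ := min (max z 0) 1

theorem clamp01_mem (z : ℝ) : clamp01 z ∈ Set.Icc (0 : ℝ) 1 :=
  ⟨le_min (le_max_right _ _) zero_le_one, min_le_right _ _⟩

theorem abs_clamp01_sub_le (z : ℝ) {y : ℝ} (hy : y ∈ Set.Icc (0 : ℝ) 1) :
    |clamp01 z - y| ≤ |z - y| := by
  have hy' : clamp01 y = y := by simp [clamp01, hy.1, hy.2]
  calc |clamp01 z - y| = |clamp01 z - clamp01 y| := by rw [hy']
    _ ≤ max |max z 0 - max y 0| |(1 : ℝ) - 1| := abs_min_sub_min_le_max _ _ _ _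
    _ ≤ |z - y| := by simpa using abs_max_sub_max_le_abs z y 0

def approxProd (M : ℝ → ℝ → ℝ) : (m : ℕ) → (Fin (m + 1) → ℝ) → ℝ
  | 0, z => z 0
  | m + 1, z => M (approxProd M m (Fin.init z)) (z (Fin.last (m + 1)))

theorem approxProd_mem {M : ℝ → ℝ → ℝ} (hM : ∀ a b, M a b ∈ Set.Icc (0 : ℝ) 1) {m : ℕ}
    {z : Fin (m + 1) → ℝ} (hz : ∀ i, z i ∈ Set.Icc (0 : ℝ) 1) : approxProd M m z ∈ Set.Icc 0 1 := by
  cases m with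
  | zero => exact hz 0
  | succ m => exact hM _ _

theorem abs_approxProd_sub_prod_le {M : ℝ → ℝ → ℝ} {ε : ℝ} (hM : ∀ a b, M a b ∈ Set.Icc (0 : ℝ) 1)
    (hMε : ∀ a ∈ Set.Icc (0 : ℝ) 1, ∀ b ∈ Set.Icc (0 : ℝ) 1, |M a b - a * b| ≤ ε) :
    ∀ {m : ℕ} {z : Fin (m + 1) → ℝ}, (∀ i, z i ∈ Set.Icc (0 : ℝ) 1) →
      |approxProd M m z - ∏ i, z i| ≤ m * ε
  | 0, z, _ => by simp [approxProd]
  | m + 1, z, hz => by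
    have ih : |approxProd M m (Fin.init z) - ∏ i, z (Fin.castSucc i)| ≤ m * ε :=
      abs_approxProd_sub_prod_le hM hMε fun i => hz _
    have hq : approxProd M m (Fin.init z) ∈ Set.Icc 0 1 := approxProd_mem hM fun i => hz _
    have hy := hz (Fin.last (m + 1))
    rw [approxProd, Fin.prod_univ_castSucc]
    generalize approxProd M m (Fin.init z) = q at *
    generalize ∏ i, z (Fin.castSucc i) = p at *
    generalize z (Fin.last (m + 1)) = y at *
    have hy' : |y| ≤ 1 := abs_le.mpr ⟨by linarith [hy.1], hy.2⟩
    calc |M q y - p * y| = |(M q y - q * y) + (q - p) * y| := by ring_nf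
      _ ≤ ε + m * ε * 1 := by
          refine (abs_add_le _ _).trans (add_le_add (hMε q hq y hy) ?_)
          rw [abs_mul]
          exact mul_le_mul ih hy' (abs_nonneg _) ((abs_nonneg _).trans ih)
      _ = (m + 1 : ℕ) * ε := by push_cast; ring

/-- Lanes of the product network: `inl j` carries the input `z j`, and each of the three
squaring units `u` has knot lanes `inr (u, some i)` and an accumulator `inr (u, none)`. -/
abbrev Lane (K n : ℕ) : Type := Fin K ⊕ Fin 3 × Option (Fin n)

def polarArgs (a b : ℝ) : Fin 3 → ℝ := ![a, b, (a + b) / 2]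

theorem polarArgs_mem {a b : ℝ} (ha : a ∈ Set.Icc (0 : ℝ) 1) (hb : b ∈ Set.Icc (0 : ℝ) 1) :
    ∀ u, polarArgs a b u ∈ Set.Icc (0 : ℝ) 1 := by
  have hab : (a + b) / 2 ∈ Set.Icc (0 : ℝ) 1 := ⟨by linarith [ha.1, hb.1], by linarith [ha.2, hb.2]⟩
  intro u
  fin_cases u <;> assumption

def clampedMul (n R : ℕ) (a b : ℝ) : ℝ := clamp01 (polarMul (sqApprox n (R + 1)) a b)

theorem abs_clampedMul_sub_mul_le {n : ℕ} (hn : 0 < n) (R : ℕ) {a b : ℝ}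
    (ha : a ∈ Set.Icc (0 : ℝ) 1) (hb : b ∈ Set.Icc (0 : ℝ) 1) :
    |clampedMul n R a b - a * b| ≤ 3 * (((n : ℝ) ^ 2)⁻¹ ^ (R + 1) / 4) :=
  (abs_clamp01_sub_le _ ⟨mul_nonneg ha.1 hb.1, mul_le_one₀ ha.2 hb.1 hb.2⟩).trans
    (abs_polarMul_sub_mul_le (fun _ ht => abs_sqApprox_sub_sq_le hn ht _) ha hb)

section Layers

variable {K n : ℕ}

def knotRead (c : ℕ → ℝ) (u : Fin 3) (v : Lane K n → ℝ) : ℝ :=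
  ∑ i : Fin n, c i * v (.inr (u, some i))

theorem knotRead_eq (c : ℕ → ℝ) {u : Fin 3} {v : Lane K n → ℝ} {τ : ℝ}
    (hv : ∀ i : Fin n, v (.inr (u, some i)) = max (τ - (i : ℕ) / n) 0) :
    knotRead c u v = knotSum n c τ := by
  rw [knotRead, knotSum, ← Fin.sum_univ_eq_sum_range]
  exact sum_congr rfl fun i _ => by rw [hv i]

theorem knotRead_mem (c : ℕ → ℝ) (u : Fin 3) :
    knotRead (K := K) (n := n) c u ∈ affineFunctions _ := by
  have : knotRead (K := K) (n := n) c u = ∑ i : Fin n, c i • fun v => v (.inr (u, some i)) := by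
    funext v
    simp [knotRead]
  rw [this]
  exact sum_mem fun i _ => Submodule.smul_mem _ _ (eval_mem _)

def sqStep (n r : ℕ) (v : Lane K n → ℝ) : Lane K n → ℝ
  | .inl j => v (.inl j)
  | .inr (u, some i) => knotRead (zigzagCoeff n) u v - (i : ℕ) / n
  | .inr (u, none) => v (.inr (u, none)) - ((n : ℝ) ^ 2)⁻¹ ^ r * knotRead (sqCorrectionCoeff n) u v

def sqStack (n : ℕ) : ℕ → (Lane K n → ℝ) → Lane K n → ℝ
  | 0 => id
  | r + 1 => reluLayer (sqStep n r) ∘ sqStack n r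

def mulPre (n R : ℕ) (v : Lane K n → ℝ) : Lane K n → ℝ
  | .inl j => v (.inl j)
  | .inr (_, some _) => 0
  | .inr (_, none) => 2 * sqStep n R v (.inr (2, none)) - sqStep n R v (.inr (0, none)) / 2 -
      sqStep n R v (.inr (1, none)) / 2

/-- Clamping takes two ReLU layers: `max (1 - max p 0) 0 = 1 - clamp01 p`. -/
def flipPre (v : Lane K n → ℝ) : Lane K n → ℝ
  | .inl j => v (.inl j)
  | .inr (_, some _) => 0
  | .inr (_, none) => 1 - v (.inr (0, none))

def loadPre (a b : ℝ) (z : Fin K → ℝ) : Lane K n → ℝ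
  | .inl j => z j
  | .inr (u, some i) => polarArgs a b u - (i : ℕ) / n
  | .inr (u, none) => polarArgs a b u

def loadFactor (c : Fin K) (v : Lane K n → ℝ) : Lane K n → ℝ :=
  loadPre (1 - v (.inr (0, none))) (v (.inl c)) fun j => v (.inl j)

def mulBlock (n R : ℕ) : (Lane K n → ℝ) → Lane K n → ℝ :=
  reluLayer flipPre ∘ reluLayer (mulPre n R) ∘ sqStack n R

def prodChain (n R : ℕ) : (j : ℕ) → j + 2 ≤ K → (Lane K n → ℝ) → Lane K n → ℝ
  | 0, _ => mulBlock n R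
  | j + 1, h => mulBlock n R ∘ reluLayer (loadFactor ⟨j + 2, h⟩) ∘ prodChain n R j (by omega)

theorem sqStep_mem (n r : ℕ) :
    ∀ l, (fun v : Lane K n → ℝ => sqStep n r v l) ∈ affineFunctions (Lane K n)
  | .inl _ => eval_mem _
  | .inr (u, some _) => sub_mem (knotRead_mem _ u) (const_mem _)
  | .inr (u, none) => sub_mem (eval_mem _) (Submodule.smul_mem _ _ (knotRead_mem _ u))

theorem mulPre_mem (n R : ℕ) :
    ∀ l, (fun v : Lane K n → ℝ => mulPre n R v l) ∈ affineFunctions (Lane K n)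
  | .inl _ => eval_mem _
  | .inr (_, some _) => const_mem _
  | .inr (_, none) => by
    have h := fun u => sqStep_mem (K := K) n R (.inr (u, none))
    have : (fun v : Lane K n → ℝ => mulPre n R v (.inr (0, none))) =
        (2 : ℝ) • (fun v => sqStep n R v (.inr (2, none))) -
          (2⁻¹ : ℝ) • (fun v => sqStep n R v (.inr (0, none))) -
          (2⁻¹ : ℝ) • (fun v => sqStep n R v (.inr (1, none))) := by
      funext v
      simp only [mulPre, Pi.sub_apply, Pi.smul_apply, smul_eq_mul]
      ring
    exact this ▸ sub_mem (sub_mem (Submodule.smul_mem _ _ (h 2)) (Submodule.smul_mem _ _ (h 0)))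
      (Submodule.smul_mem _ _ (h 1))

theorem flipPre_mem : ∀ l, (fun v : Lane K n → ℝ => flipPre v l) ∈ affineFunctions (Lane K n)
  | .inl _ => eval_mem _
  | .inr (_, some _) => const_mem _
  | .inr (_, none) => sub_mem (const_mem 1) (eval_mem _)

theorem loadPre_mem {ι : Type} [Fintype ι] {a b : (ι → ℝ) → ℝ} (ha : a ∈ affineFunctions ι)
    (hb : b ∈ affineFunctions ι) {z : (ι → ℝ) → Fin K → ℝ}
    (hz : ∀ j, (fun x => z x j) ∈ affineFunctions ι) :
    ∀ l : Lane K n, (fun x => loadPre (a x) (b x) (z x) l) ∈ affineFunctions ι := by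
  have hargs : ∀ u, (fun x => polarArgs (a x) (b x) u) ∈ affineFunctions ι := by
    have hab : (fun x => (a x + b x) / 2) ∈ affineFunctions ι := by
      convert Submodule.smul_mem _ (2⁻¹ : ℝ) (add_mem ha hb) using 1
      funext x
      simp only [Pi.smul_apply, Pi.add_apply, smul_eq_mul]
      ring
    intro u
    fin_cases u <;> assumption
  rintro (j | ⟨u, _ | i⟩)
  · exact hz j
  · exact hargs u
  · exact sub_mem (hargs u) (const_mem _)

theorem loadFactor_mem (c : Fin K) :
    ∀ l, (fun v : Lane K n → ℝ => loadFactor c v l) ∈ affineFunctions (Lane K n) :=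
  loadPre_mem (sub_mem (const_mem 1) (eval_mem _)) (eval_mem _) fun _ => eval_mem _

theorem reluStack_sqStack (n : ℕ) : ∀ R, ReLUStack (Lane K n) R (sqStack n R)
  | 0 => .id
  | r + 1 => (reluStack_sqStack n r).snoc (sqStep_mem n r)

theorem reluStack_mulBlock (n R : ℕ) : ReLUStack (Lane K n) (R + 2) (mulBlock n R) :=
  ((reluStack_sqStack n R).snoc (mulPre_mem n R)).snoc flipPre_mem

theorem reluStack_prodChain (n R : ℕ) :
    ∀ j (h : j + 2 ≤ K), ReLUStack (Lane K n) (R + 2 + j * (R + 3)) (prodChain n R j h)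
  | 0, _ => by rw [zero_mul, add_zero]; exact reluStack_mulBlock n R
  | j + 1, h => by
    have := ((reluStack_prodChain n R j (by omega)).snoc (loadFactor_mem ⟨j + 2, h⟩)).comp
      (reluStack_mulBlock n R)
    rwa [show R + 2 + (R + 2 + j * (R + 3) + 1) = R + 2 + (j + 1) * (R + 3) by ring] at this

end Layers

section Semantics

variable {K n : ℕ}

/-- The three squaring units have run `r` layers on the arguments `t`. -/
def UnitState (n r : ℕ) (t : Fin 3 → ℝ) (z : Fin K → ℝ) (v : Lane K n → ℝ) : Prop :=
  (∀ j, v (.inl j) = z j) ∧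
  (∀ u (i : Fin n), v (.inr (u, some i)) = max ((zigzag n)^[r] (t u) - (i : ℕ) / n) 0) ∧
  ∀ u, v (.inr (u, none)) = sqApprox n r (t u)

def OutState (z : Fin K → ℝ) (q : ℝ) (v : Lane K n → ℝ) : Prop :=
  (∀ j, v (.inl j) = z j) ∧ v (.inr (0, none)) = 1 - q

theorem unitState_loadPre {z : Fin K → ℝ} (hz : ∀ j, z j ∈ Set.Icc (0 : ℝ) 1) {a b : ℝ}
    (ha : a ∈ Set.Icc (0 : ℝ) 1) (hb : b ∈ Set.Icc (0 : ℝ) 1) :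
    UnitState n 0 (polarArgs a b) z (reluLayer (loadPre a b) z) :=
  ⟨fun j => max_eq_left (hz j).1, fun _ _ => rfl,
    fun u => by simp [reluLayer, loadPre, sqApprox_zero, (polarArgs_mem ha hb u).1]⟩

theorem unitState_reluLayer_sqStep {r : ℕ} {t : Fin 3 → ℝ} {z : Fin K → ℝ} {v : Lane K n → ℝ}
    (h : UnitState n r t z v) (hn : 0 < n) (ht : ∀ u, t u ∈ Set.Icc (0 : ℝ) 1) (hz : ∀ j, 0 ≤ z j) :
    UnitState n (r + 1) t z (reluLayer (sqStep n r) v) := by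
  obtain ⟨hcarry, hknot, hacc⟩ := h
  refine ⟨fun j => ?_, fun u i => ?_, fun u => ?_⟩
  · simp only [reluLayer, sqStep, hcarry]
    exact max_eq_left (hz j)
  · simp only [reluLayer, sqStep, knotRead_eq _ (hknot u), Function.iterate_succ_apply']
    rfl
  · simp only [reluLayer, sqStep, hacc, knotRead_eq _ (hknot u)]
    rw [← sqCorrection, ← sqApprox_succ]
    exact max_eq_left ((sq_nonneg _).trans (sq_le_sqApprox hn (ht u) _))

theorem unitState_sqStack {t : Fin 3 → ℝ} {z : Fin K → ℝ} {v : Lane K n → ℝ}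
    (h : UnitState n 0 t z v) (hn : 0 < n) (ht : ∀ u, t u ∈ Set.Icc (0 : ℝ) 1) (hz : ∀ j, 0 ≤ z j) :
    ∀ R, UnitState n R t z (sqStack n R v)
  | 0 => h
  | r + 1 => unitState_reluLayer_sqStep (unitState_sqStack h hn ht hz r) hn ht hz

theorem outState_mulBlock {z : Fin K → ℝ} {a b : ℝ} {v : Lane K n → ℝ}
    (h : UnitState n 0 (polarArgs a b) z v) (hn : 0 < n) (ha : a ∈ Set.Icc (0 : ℝ) 1)
    (hb : b ∈ Set.Icc (0 : ℝ) 1) (hz : ∀ j, 0 ≤ z j) (R : ℕ) :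
    OutState z (clampedMul n R a b) (mulBlock n R v) := by
  obtain ⟨hcarry, hknot, hacc⟩ := unitState_sqStack h hn (polarArgs_mem ha hb) hz R
  have hsq : ∀ u, sqStep n R (sqStack n R v) (.inr (u, none)) =
      sqApprox n (R + 1) (polarArgs a b u) := by
    intro u
    rw [sqStep, hacc, knotRead_eq _ (hknot u), sqApprox_succ]
    rfl
  refine ⟨fun j => ?_, ?_⟩
  · simp only [mulBlock, Function.comp_apply, reluLayer, flipPre, mulPre, hcarry,
      max_eq_left (hz j)]
  · simp only [mulBlock, Function.comp_apply, reluLayer, flipPre, mulPre, hsq]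
    rw [clampedMul, clamp01, ← max_sub_sub_left, sub_self]
    rfl

theorem unitState_reluLayer_loadFactor {z : Fin K → ℝ} {q : ℝ} {v : Lane K n → ℝ}
    (h : OutState z q v) (hz : ∀ j, z j ∈ Set.Icc (0 : ℝ) 1) (hq : q ∈ Set.Icc (0 : ℝ) 1)
    (c : Fin K) : UnitState n 0 (polarArgs q (z c)) z (reluLayer (loadFactor c) v) := by
  obtain ⟨hcarry, hout⟩ := h
  show UnitState n 0 _ z
    fun l => max (loadPre (1 - v (.inr (0, none))) (v (.inl c)) (fun j => v (.inl j)) l) 0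
  rw [funext hcarry, hout, hcarry c, sub_sub_cancel]
  exact unitState_loadPre hz hq (hz c)

theorem outState_prodChain (hn : 0 < n) {z : Fin K → ℝ} (hz : ∀ j, z j ∈ Set.Icc (0 : ℝ) 1)
    (R : ℕ) {v : Lane K n → ℝ} (hK : 2 ≤ K)
    (hv : UnitState n 0 (polarArgs (z ⟨0, by omega⟩) (z ⟨1, by omega⟩)) z v) :
    ∀ j (h : j + 2 ≤ K), OutState z
      (approxProd (clampedMul n R) (j + 1) fun i => z (Fin.castLE h i)) (prodChain n R j h v)
  | 0, _ => outState_mulBlock hv hn (hz _) (hz _) (fun j => (hz j).1) R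
  | j + 1, h => by
    have hq := approxProd_mem (M := clampedMul n R) (fun _ _ => clamp01_mem _)
      fun i : Fin (j + 2) => hz (Fin.castLE (by omega) i)
    exact outState_mulBlock (unitState_reluLayer_loadFactor
      (outState_prodChain hn hz R hK hv j (by omega)) hz hq ⟨j + 2, h⟩) hn hq (hz _)
      (fun j => (hz j).1) R

end Semantics

theorem exists_relu_approx_prod (m n R : ℕ) (hn : 0 < n) :
    ∃ Φ : (Fin (m + 2) → ℝ) → ℝ,
      ImplementedBy (m + 2) (m + 2 + 3 * (n + 1) : ℕ) ((m + 1) * (R + 3) : ℕ) Φ ∧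
      ∀ z ∈ unitCube (m + 2),
        |Φ z - ∏ i, z i| ≤ (m + 1) * (3 * (((n : ℝ) ^ 2)⁻¹ ^ (R + 1) / 4)) := by
  let input (z : Fin (m + 2) → ℝ) : Lane (m + 2) n → ℝ := loadPre (z 0) (z 1) z
  have hinput : ∀ l, (fun z => input z l) ∈ affineFunctions (Fin (m + 2)) :=
    loadPre_mem (eval_mem 0) (eval_mem 1) eval_mem
  have hout : (fun v : Lane (m + 2) n → ℝ => 1 - v (.inr (0, none))) ∈ affineFunctions _ :=
    sub_mem (const_mem 1) (eval_mem _)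
  have hwidth : (Fintype.card (Lane (m + 2) n) : ℝ) ≤ (m + 2 + 3 * (n + 1) : ℕ) := by simp
  refine ⟨fun z => 1 - prodChain n R m le_rfl (reluLayer input z) (.inr (0, none)),
    ⟨_, le_of_eq ?_, (reluStack_prodChain n R m le_rfl).reluNetRec hwidth hout hinput⟩,
    fun z hz => ?_⟩
  · push_cast
    ring
  have hz' : ∀ j, z j ∈ Set.Icc (0 : ℝ) 1 := fun j => ⟨hz.1 j, hz.2 j⟩
  obtain ⟨-, hΦ⟩ : OutState z _ (prodChain n R m le_rfl (reluLayer input z)) :=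
    outState_prodChain hn hz' R (by omega) (unitState_loadPre hz' (hz' 0) (hz' 1)) m le_rfl
  have := abs_approxProd_sub_prod_le (M := clampedMul n R) (fun _ _ => clamp01_mem _)
    (fun a ha b hb => abs_clampedMul_sub_mul_le hn R ha hb) fun i => hz' (Fin.castLE le_rfl i)
  simp only [Fin.castLE_refl] at this
  show |1 - prodChain n R m le_rfl (reluLayer input z) (.inr (0, none)) - _| ≤ _
  rw [hΦ, sub_sub_cancel]
  exact_mod_cast this

def padFactors {d : ℕ} (l : List (Fin d)) (K : ℕ) (x : Fin d → ℝ) (j : Fin K) : ℝ :=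
  if h : (j : ℕ) < l.length then x l[(j : ℕ)] else 1

section PadFactors

variable {d : ℕ} (l : List (Fin d)) (K : ℕ)

theorem isAffineMap_padFactors : IsAffineMap d K (padFactors l K) :=
  isAffineMap_of_forall_mem fun j => by
    by_cases h : (j : ℕ) < l.length
    · simpa only [padFactors, h, dif_pos] using eval_mem _
    · simpa only [padFactors, h, dif_neg, not_false_eq_true] using const_mem 1

theorem padFactors_mem_unitCube {x : Fin d → ℝ} (hx : x ∈ unitCube d) :
    padFactors l K x ∈ unitCube K := by
  refine ⟨fun j => ?_, fun j => ?_⟩ <;> unfold padFactors <;> split_ifs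
  exacts [hx.1 _, zero_le_one, hx.2 _, le_rfl]

theorem prod_padFactors (hl : l.length ≤ K) (x : Fin d → ℝ) :
    ∏ j, padFactors l K x j = (l.map x).prod := by
  let g (j : ℕ) : ℝ := if h : j < l.length then x l[j] else 1
  calc ∏ j, padFactors l K x j = ∏ j ∈ range K, g j := Fin.prod_univ_eq_prod_range g K
    _ = ∏ j ∈ range l.length, g j :=
        (prod_subset (range_subset_range.mpr hl) fun j _ hj => dif_neg (by simpa using hj)).symm
    _ = ∏ j : Fin l.length, x l[(j : ℕ)] := by
        rw [← Fin.prod_univ_eq_prod_range]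
        exact prod_congr rfl fun j _ => dif_pos j.isLt
    _ = (l.map x).prod := Fin.prod_univ_fun_getElem l x

end PadFactors

def monomialFactors {d : ℕ} (α : Fin d → ℕ) : List (Fin d) :=
  (List.finRange d).flatMap fun i => List.replicate (α i) i

theorem length_monomialFactors {d : ℕ} (α : Fin d → ℕ) :
    (monomialFactors α).length = ∑ i, α i := by
  simp [monomialFactors, Fin.sum_univ_def]

theorem prod_map_monomialFactors {d : ℕ} (α : Fin d → ℕ) (x : Fin d → ℝ) :
    ((monomialFactors α).map x).prod = ∏ i, x i ^ α i := by
  simp [monomialFactors, List.flatMap_def, List.prod_flatten, Fin.prod_univ_def, Function.comp_def]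

theorem inv_sq_pow_le_rpow_neg {b : ℝ} (hb : 1 ≤ b) {s : ℕ} {x : ℝ} (hx : x ≤ 2 * s) :
    (b ^ 2)⁻¹ ^ s ≤ b ^ (-x) := by
  rw [inv_pow, ← pow_mul, ← Real.rpow_natCast, ← Real.rpow_neg (by linarith)]
  exact Real.rpow_le_rpow_of_exponent_le hb (by push_cast; linarith)

theorem relu_approx_monomial_general
    (d k : ℕ) (hk : 0 < k)
    (α : Fin d → ℕ) (hα : (∑ i, α i) ≤ k)
    (N L : ℕ) (hL : 0 < L) :
    ∃ φ : (Fin d → ℝ) → ℝ,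
      ImplementedBy d (9 * ((N : ℝ) + 1) + k - 1) (7 * (k : ℝ) ^ 2 * L) φ ∧
      ∀ x ∈ unitCube d,
        |φ x - ∏ i, (x i) ^ (α i)| ≤ 9 * k * ((N : ℝ) + 1) ^ (-(7 * (k : ℝ) * L)) := by
  obtain ⟨m, rfl⟩ : ∃ m, k = m + 1 := ⟨k - 1, by omega⟩
  obtain ⟨Φ, hΦ, hΦ_err⟩ := exists_relu_approx_prod m (N + 1) (4 * (m + 1) * L) N.succ_pos
  have hl : (monomialFactors α).length ≤ m + 2 := by rw [length_monomialFactors]; omega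
  refine ⟨fun x => Φ (padFactors (monomialFactors α) (m + 2) x),
    (hΦ.comp_affine_s5 (isAffineMap_padFactors _ _)).mono_s5 ?_ ?_, fun x hx => ?_⟩
  · push_cast
    linarith
  · have hmL : 0 < (m + 1) * L := Nat.mul_pos m.succ_pos hL
    have : (m + 1) * (4 * (m + 1) * L + 3) ≤ 7 * (m + 1) ^ 2 * L := by nlinarith
    exact_mod_cast this
  · rw [← prod_map_monomialFactors, ← prod_padFactors _ _ hl]
    refine (hΦ_err _ (padFactors_mem_unitCube _ _ hx)).trans ?_
    have hpow := inv_sq_pow_le_rpow_neg (b := (N : ℝ) + 1) (by linarith [N.cast_nonneg (α := ℝ)])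
      (s := 4 * (m + 1) * L + 1) (x := 7 * ((m + 1 : ℕ) : ℝ) * L) (by push_cast; nlinarith)
    push_cast at hpow ⊢
    nlinarith [pow_nonneg (inv_nonneg.mpr (sq_nonneg ((N : ℝ) + 1))) (4 * (m + 1) * L + 1)]

/-- Proposition 4.1: ReLU FNNs of width `9(N+1)+k-1` and depth `7k²L` approximate
the monomial `x^α`, `‖α‖₁ ≤ k`, within `9k(N+1)^{-7kL}` on `[0,1]^d`. -/
theorem relu_approx_monomial
    (d k : ℕ) (hd : 0 < d) (hk : 0 < k)
    (α : Fin d → ℕ) (hα : (∑ i, α i) ≤ k)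
    (N L : ℕ) (hN : 0 < N) (hL : 0 < L) :
    ∃ φ : (Fin d → ℝ) → ℝ,
      ImplementedBy d (9 * ((N : ℝ) + 1) + k - 1) (7 * (k : ℝ) ^ 2 * L) φ ∧
      ∀ x ∈ unitCube d,
        |φ x - ∏ i, (x i) ^ (α i)| ≤ 9 * k * ((N : ℝ) + 1) ^ (-(7 * (k : ℝ) * L)) :=
  relu_approx_monomial_general d k hk α hα N L hL

end
end

section
/- For any N, L ∈ ℕ+ and any a, b ∈ ℝ with a < b, there exists a function φ : ℝ² → ℝ implemented by a ReLU FNN with width at most 9N + 1 and depth at most L such that |φ(x,y) − xy| ≤ 6·(b−a)²·N^{−L} for all x, y ∈ [a,b]. -/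
/-!
Put `c = b - a`, `u = (x + y - 2a) / (2c)` and `v = (x - y + c) / (2c)`: then `u, v ∈ [0, 1]` and
`x y = (a + c u)² - c² (v - 1/2)²`, so it suffices to approximate `u²` and `v²`.

Let `T` be the sawtooth on `[0, 1]` with one tooth of height 1 on each cell `[j/N, (j+1)/N]`.
Both `T g` and `I g := 4N² g² - (T g)²` are linear combinations of the `3N` ReLU features
`max (2N g - 2k - i) 0` (`k < N`, `i < 3`), and `I ≥ 0` on `[0, 1]`: if `N g = j + t` with
`t ∈ [0, 1]`, then `T g = 1 - |2t - 1|` and `I g = 4j² + 4(2j + 1)t - 2 T g`.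
Hence `A_s := (4N²)^s u² - (T^s u)²` is nonnegative and satisfies `A_{s+1} = 4N² A_s + I (T^s u)`, so
each hidden layer can pass `u`, `A_s` and the features of `T^s u` on to the next, with `3N + 2`
units per track. After `L` layers `A_L / (4N²)^L` is within `(4N²)^(-L)` of `u²`, and the read-out
is within `c² (4N²)^(-L) ≤ 6 c² N^(-L)` of `x y`, with width `2(3N + 2) ≤ 9N + 1`.
-/

open Real

noncomputable section

open Set

def relu {ι : Type*} (z : ι → ℝ) : ι → ℝ := fun i => max (z i) 0

theorem isAffineMap_of_affineMap {m n : ℕ} (f : (Fin m → ℝ) →ᵃ[ℝ] (Fin n → ℝ)) :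
    IsAffineMap m n f :=
  ⟨LinearMap.toMatrix' f.linear, f 0, fun x => by
    rw [LinearMap.toMatrix'_mulVec]
    conv_lhs => rw [f.decomp]
    rfl⟩

theorem reluNetRec_iterate {ι : Type*} [Fintype ι] [Nonempty ι] {W : ℝ}
    (hW : (Fintype.card ι : ℝ) ≤ W) (B : (ι → ℝ) →ᵃ[ℝ] (ι → ℝ)) (D : (ι → ℝ) →ᵃ[ℝ] ℝ) (k : ℕ) :
    ∀ {d : ℕ} (A : (Fin d → ℝ) →ᵃ[ℝ] (ι → ℝ)),
      ReLUNetRec W k d (fun x => D ((B ∘ relu)^[k] (A x))) := by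
  induction k with
  | zero =>
    intro d A
    exact ⟨AffineMap.pi fun _ => D.comp A, isAffineMap_of_affineMap _, fun _ => rfl⟩
  | succ k ih =>
    intro d A
    let e := LinearEquiv.funCongrLeft ℝ ℝ (Fintype.equivFin ι)
    have relu_e : ∀ z, e (relu (e.symm z)) = relu z := fun z => by ext i; simp [e, relu]
    refine ⟨Fintype.card ι, Fintype.card_pos, hW, _,
      isAffineMap_of_affineMap (e.symm.toLinearMap.toAffineMap.comp A), _,
      ih (B.comp e.toLinearMap.toAffineMap), fun x => ?_⟩
    change _ = D ((B ∘ relu)^[k] (B (e (relu (e.symm (A x))))))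
    rw [relu_e]
    rfl

namespace ProductNet

section Tooth

variable {s : ℝ}

def tooth (s : ℝ) : ℝ := max s 0 - 2 * max (s - 1) 0 + max (s - 2) 0

def ramp (s : ℝ) : ℝ := max s 0 - max (s - 2) 0

lemma tooth_of_nonpos (hs : s ≤ 0) : tooth s = 0 := by
  simp [tooth, hs, (by linarith : s - 1 ≤ 0), (by linarith : s - 2 ≤ 0)]

lemma tooth_of_two_le (hs : 2 ≤ s) : tooth s = 0 := by
  rw [tooth, max_eq_left (by linarith), max_eq_left (by linarith), max_eq_left (by linarith)]
  ring

lemma tooth_of_mem_Icc (hs : s ∈ Icc 0 2) : tooth s = 1 - |s - 1| := by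
  obtain ⟨h0, h2⟩ := hs
  rw [tooth, max_eq_left h0, max_eq_right (by linarith : s - 2 ≤ 0)]
  rcases le_total s 1 with h | h
  · rw [max_eq_right (by linarith), abs_of_nonpos (by linarith)]; ring
  · rw [max_eq_left (by linarith), abs_of_nonneg (by linarith)]; ring

lemma ramp_of_nonpos (hs : s ≤ 0) : ramp s = 0 := by
  simp [ramp, hs, (by linarith : s - 2 ≤ 0)]

lemma ramp_of_two_le (hs : 2 ≤ s) : ramp s = 2 := by
  rw [ramp, max_eq_left (by linarith), max_eq_left (by linarith)]
  ring

lemma ramp_of_mem_Icc (hs : s ∈ Icc 0 2) : ramp s = s := by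
  rw [ramp, max_eq_left hs.1, max_eq_right (by linarith [hs.2])]
  ring

end Tooth

lemma sum_range_two_mul_add_one (j : ℕ) : ∑ k ∈ Finset.range j, (2 * (k : ℝ) + 1) = j ^ 2 := by
  induction j with
  | zero => simp
  | succ j ih => rw [Finset.sum_range_succ, ih]; push_cast; ring

section Sawtooth

variable (N : ℕ)

open LinearMap in
def toothL (k : Fin N) : (Fin N × Fin 3 → ℝ) →ₗ[ℝ] ℝ := proj (k, 0) - 2 • proj (k, 1) + proj (k, 2)

open LinearMap in
def rampL (k : Fin N) : (Fin N × Fin 3 → ℝ) →ₗ[ℝ] ℝ :=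
  (proj (k, 0) : (Fin N × Fin 3 → ℝ) →ₗ[ℝ] ℝ) - proj (k, 2)

def sawtoothL : (Fin N × Fin 3 → ℝ) →ₗ[ℝ] ℝ := ∑ k, toothL N k

def incrementL : (Fin N × Fin 3 → ℝ) →ₗ[ℝ] ℝ :=
  ∑ k : Fin N, ((2 * (2 * k + 1) : ℝ) • rampL N k - (2 : ℝ) • toothL N k)

def features (g : ℝ) : Fin N × Fin 3 → ℝ :=
  relu fun p => 2 * N * g - (2 * (p.1 : ℕ) + (p.2 : ℕ))

def sawtooth (g : ℝ) : ℝ := sawtoothL N (features N g)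

def increment (g : ℝ) : ℝ := incrementL N (features N g)

def accum (u : ℝ) (s : ℕ) : ℝ := (4 * N ^ 2) ^ s * u ^ 2 - ((sawtooth N)^[s] u) ^ 2

variable {N}

lemma toothL_features (g : ℝ) (k : Fin N) :
    toothL N k (features N g) = tooth (2 * N * g - 2 * (k : ℕ)) := by
  simp [toothL, features, tooth, relu]
  ring_nf

lemma rampL_features (g : ℝ) (k : Fin N) :
    rampL N k (features N g) = ramp (2 * N * g - 2 * (k : ℕ)) := by
  simp [rampL, features, ramp, relu]
  ring_nf

lemma sawtooth_eq_sum (g : ℝ) :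
    sawtooth N g = ∑ k ∈ Finset.range N, tooth (2 * N * g - 2 * k) := by
  rw [← Fin.sum_univ_eq_sum_range]
  simp [sawtooth, sawtoothL, toothL_features]

lemma increment_eq_sum (g : ℝ) : increment N g = ∑ k ∈ Finset.range N,
    (2 * (2 * k + 1) * ramp (2 * N * g - 2 * k) - 2 * tooth (2 * N * g - 2 * k)) := by
  rw [← Fin.sum_univ_eq_sum_range]
  simp [increment, incrementL, toothL_features, rampL_features]

lemma exists_cell (hN : 0 < N) {g : ℝ} (hg : g ∈ Icc 0 1) :
    ∃ j < N, ∃ t ∈ Icc (0 : ℝ) 1, N * g = j + t := by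
  have hNg : 0 ≤ (N : ℝ) * g := mul_nonneg (Nat.cast_nonneg N) hg.1
  refine ⟨min ⌊(N : ℝ) * g⌋₊ (N - 1), by omega, N * g - min ⌊(N : ℝ) * g⌋₊ (N - 1), ⟨?_, ?_⟩,
    by ring⟩
  · have : ((min ⌊(N : ℝ) * g⌋₊ (N - 1) : ℕ) : ℝ) ≤ ⌊(N : ℝ) * g⌋₊ := by
      exact_mod_cast min_le_left _ _
    linarith [Nat.floor_le hNg]
  · rcases le_total ⌊(N : ℝ) * g⌋₊ (N - 1) with h | h
    · rw [min_eq_left h]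
      linarith [Nat.lt_floor_add_one ((N : ℝ) * g)]
    · rw [min_eq_right h, Nat.cast_pred hN]
      nlinarith [hg.2]

section Cell

variable {j : ℕ} {t g : ℝ}

lemma two_le_cell_arg {k : ℕ} (hk : k < j) (ht : 0 ≤ t) : 2 ≤ 2 * ((j : ℝ) - k) + 2 * t := by
  have : (k : ℝ) + 1 ≤ j := by exact_mod_cast hk
  linarith

lemma cell_arg_nonpos {k : ℕ} (hk : j < k) (ht : t ≤ 1) : 2 * ((j : ℝ) - k) + 2 * t ≤ 0 := by
  have : (j : ℝ) + 1 ≤ k := by exact_mod_cast hk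
  linarith

variable (hj : j < N) (ht : t ∈ Icc 0 1) (hg : N * g = j + t)
include hj ht hg

lemma sawtooth_of_cell : sawtooth N g = 1 - |2 * t - 1| := by
  have harg : ∀ k : ℕ, 2 * N * g - 2 * k = 2 * ((j : ℝ) - k) + 2 * t := fun k => by linarith
  rw [sawtooth_eq_sum, Finset.sum_eq_single j, harg, sub_self, mul_zero, zero_add,
    tooth_of_mem_Icc ⟨by linarith [ht.1], by linarith [ht.2]⟩]
  · intro k _ hkj
    rw [harg]
    rcases lt_or_gt_of_ne hkj with h | h
    · exact tooth_of_two_le (two_le_cell_arg h ht.1)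
    · exact tooth_of_nonpos (cell_arg_nonpos h ht.2)
  · exact fun h => absurd (Finset.mem_range.2 hj) h

lemma increment_of_cell :
    increment N g = 4 * j ^ 2 + 4 * (2 * j + 1) * t - 2 * (1 - |2 * t - 1|) := by
  have harg : ∀ k : ℕ, 2 * N * g - 2 * k = 2 * ((j : ℝ) - k) + 2 * t := fun k => by linarith
  have h2t : 2 * t ∈ Icc (0 : ℝ) 2 := ⟨by linarith [ht.1], by linarith [ht.2]⟩
  have below : ∑ k ∈ Finset.range j, (2 * (2 * k + 1) * ramp (2 * N * g - 2 * k)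
      - 2 * tooth (2 * N * g - 2 * k)) = 4 * j ^ 2 := by
    rw [← sum_range_two_mul_add_one, Finset.mul_sum]
    refine Finset.sum_congr rfl fun k hk => ?_
    have h := two_le_cell_arg (Finset.mem_range.1 hk) ht.1
    rw [harg, ramp_of_two_le h, tooth_of_two_le h]
    ring
  have above : ∑ k ∈ Finset.Ico (j + 1) N, (2 * (2 * k + 1) * ramp (2 * N * g - 2 * k)
      - 2 * tooth (2 * N * g - 2 * k)) = 0 := by
    refine Finset.sum_eq_zero fun k hk => ?_
    have h := cell_arg_nonpos (Nat.lt_of_succ_le (Finset.mem_Ico.1 hk).1) ht.2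
    rw [harg, ramp_of_nonpos h, tooth_of_nonpos h]
    ring
  rw [increment_eq_sum, ← Finset.sum_range_add_sum_Ico _ hj, Finset.sum_range_succ, below, above,
    harg, sub_self, mul_zero, zero_add, ramp_of_mem_Icc h2t, tooth_of_mem_Icc h2t]
  ring

end Cell

theorem mapsTo_sawtooth (hN : 0 < N) : MapsTo (sawtooth N) (Icc 0 1) (Icc 0 1) := by
  intro g hg
  obtain ⟨j, hj, t, ht, hjt⟩ := exists_cell hN hg
  rw [mem_Icc, sawtooth_of_cell hj ht hjt]
  have := abs_le.2 (⟨by linarith [ht.1], by linarith [ht.2]⟩ : -1 ≤ 2 * t - 1 ∧ 2 * t - 1 ≤ 1)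
  constructor <;> linarith [abs_nonneg (2 * t - 1)]

theorem increment_nonneg (hN : 0 < N) {g : ℝ} (hg : g ∈ Icc 0 1) : 0 ≤ increment N g := by
  obtain ⟨j, hj, t, ht, hjt⟩ := exists_cell hN hg
  rw [increment_of_cell hj ht hjt]
  have : (0 : ℝ) ≤ j := Nat.cast_nonneg j
  nlinarith [neg_abs_le (2 * t - 1), ht.1]

theorem sq_eq_increment_add_sawtooth_sq (hN : 0 < N) {g : ℝ} (hg : g ∈ Icc 0 1) :
    4 * N ^ 2 * g ^ 2 = increment N g + sawtooth N g ^ 2 := by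
  obtain ⟨j, hj, t, ht, hjt⟩ := exists_cell hN hg
  rw [increment_of_cell hj ht hjt, sawtooth_of_cell hj ht hjt]
  have : 4 * N ^ 2 * g ^ 2 = 4 * (j + t) ^ 2 := by rw [← hjt]; ring
  rw [this]
  nlinarith [sq_abs (2 * t - 1)]

lemma accum_zero (u : ℝ) : accum N u 0 = 0 := by simp [accum]

lemma accum_succ (hN : 0 < N) {u : ℝ} (hu : u ∈ Icc 0 1) (s : ℕ) :
    accum N u (s + 1) = 4 * N ^ 2 * accum N u s + increment N ((sawtooth N)^[s] u) := by
  have := sq_eq_increment_add_sawtooth_sq hN ((mapsTo_sawtooth hN).iterate s hu)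
  rw [accum, accum, Function.iterate_succ_apply']
  linear_combination this

lemma accum_nonneg (hN : 0 < N) {u : ℝ} (hu : u ∈ Icc 0 1) (s : ℕ) : 0 ≤ accum N u s := by
  induction s with
  | zero => rw [accum_zero]
  | succ s ih =>
    rw [accum_succ hN hu]
    have := increment_nonneg hN ((mapsTo_sawtooth hN).iterate s hu)
    positivity

end Sawtooth

section Network

variable (N : ℕ)

/-- Hidden units: for each of the two tracks `t`, `(t, inl 0)` carries the track input,
`(t, inl 1)` the accumulator, and `(t, inr (k, i))` the feature `max (2 N g - (2 k + i)) 0`. -/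
abbrev Coord := Fin 2 × (Fin 2 ⊕ Fin N × Fin 3)

def preact (w R g : Fin 2 → ℝ) : Coord N → ℝ
  | (t, .inl 0) => w t
  | (t, .inl 1) => R t
  | (t, .inr (k, i)) => 2 * N * g t - (2 * (k : ℕ) + (i : ℕ))

def inputUnit (t : Fin 2) : (Coord N → ℝ) →ₗ[ℝ] ℝ := LinearMap.proj (t, Sum.inl 0)

def accUnit (t : Fin 2) : (Coord N → ℝ) →ₗ[ℝ] ℝ := LinearMap.proj (t, Sum.inl 1)

def trackFeatures (t : Fin 2) : (Coord N → ℝ) →ₗ[ℝ] (Fin N × Fin 3 → ℝ) :=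
  LinearMap.funLeft ℝ ℝ fun p => (t, .inr p)

def step : (Coord N → ℝ) →ᵃ[ℝ] (Coord N → ℝ) := AffineMap.pi fun
  | (t, .inl 0) => (inputUnit N t).toAffineMap
  | (t, .inl 1) =>
    ((4 * N ^ 2 : ℝ) • accUnit N t + incrementL N ∘ₗ trackFeatures N t).toAffineMap
  | (t, .inr (k, i)) => ((2 * N : ℝ) • sawtoothL N ∘ₗ trackFeatures N t).toAffineMap
      - AffineMap.const ℝ _ (2 * (k : ℕ) + (i : ℕ) : ℝ)

def inputLayer {V : Type*} [AddCommGroup V] [Module ℝ V] (w : V →ᵃ[ℝ] (Fin 2 → ℝ)) :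
    V →ᵃ[ℝ] (Coord N → ℝ) := AffineMap.pi fun
  | (t, .inl 0) => (LinearMap.proj t).toAffineMap.comp w
  | (_, .inl 1) => 0
  | (t, .inr (k, i)) => (2 * N : ℝ) • (LinearMap.proj t).toAffineMap.comp w
      - AffineMap.const ℝ _ (2 * (k : ℕ) + (i : ℕ) : ℝ)

def readout (a c κ : ℝ) : (Coord N → ℝ) →ᵃ[ℝ] ℝ :=
  AffineMap.const ℝ _ (a ^ 2 - c ^ 2 / 4) + ((2 * a * c) • inputUnit N 0 + c ^ 2 • inputUnit N 1
    + κ • (accUnit N 0 - accUnit N 1)).toAffineMap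

variable {N}

lemma trackFeatures_relu_preact (w R g : Fin 2 → ℝ) (t : Fin 2) :
    trackFeatures N t (relu (preact N w R g)) = features N (g t) := rfl

lemma step_relu_preact {w R : Fin 2 → ℝ} (hw : ∀ t, 0 ≤ w t) (hR : ∀ t, 0 ≤ R t)
    (g : Fin 2 → ℝ) : step N (relu (preact N w R g)) =
      preact N w (fun t => 4 * N ^ 2 * R t + increment N (g t)) (fun t => sawtooth N (g t)) := by
  ext ⟨t, j | ⟨k, i⟩⟩
  · fin_cases j
    · simp [step, inputUnit, preact, relu, hw t]
    · simp [step, accUnit, preact, relu, hR t, increment, trackFeatures_relu_preact]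
  · simp [step, preact, sawtooth, trackFeatures_relu_preact]

lemma iterate_step_relu_preact (hN : 0 < N) {w : Fin 2 → ℝ} (hw : ∀ t, w t ∈ Icc 0 1) (s : ℕ) :
    (step N ∘ relu)^[s] (preact N w 0 w) =
      preact N w (fun t => accum N (w t) s) (fun t => (sawtooth N)^[s] (w t)) := by
  induction s with
  | zero => simp only [accum_zero, Function.iterate_zero, id]; rfl
  | succ s ih =>
    rw [Function.iterate_succ_apply', ih, Function.comp_apply,
      step_relu_preact (fun t => (hw t).1) (fun t => accum_nonneg hN (hw t) s)]
    simp only [accum_succ hN (hw _), Function.iterate_succ_apply']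

lemma inputLayer_apply {V : Type*} [AddCommGroup V] [Module ℝ V] (w : V →ᵃ[ℝ] (Fin 2 → ℝ))
    (x : V) : inputLayer N w x = preact N (w x) 0 (w x) := by
  ext ⟨t, j | ⟨k, i⟩⟩
  · fin_cases j <;> simp [inputLayer, preact]
  · simp [inputLayer, preact]

lemma readout_preact (a c κ : ℝ) (w R g : Fin 2 → ℝ) :
    readout N a c κ (preact N w R g) =
      a ^ 2 - c ^ 2 / 4 + 2 * a * c * w 0 + c ^ 2 * w 1 + κ * (R 0 - R 1) := by
  simp [readout, inputUnit, accUnit, preact]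
  ring

end Network

def diagCoords (a c : ℝ) : (Fin 2 → ℝ) →ᵃ[ℝ] (Fin 2 → ℝ) :=
  (2 * c)⁻¹ • ((Matrix.toLin' !![1, 1; 1, -1]).toAffineMap + AffineMap.const ℝ _ ![-2 * a, c])

lemma diagCoords_apply (a c x y : ℝ) :
    diagCoords a c ![x, y] = ![(x + y - 2 * a) / (2 * c), (x - y + c) / (2 * c)] := by
  ext t
  fin_cases t <;> simp [diagCoords, div_eq_inv_mul] <;> ring

lemma diagCoords_mem_Icc {a b x y : ℝ} (hab : a < b) (hx : x ∈ Icc a b) (hy : y ∈ Icc a b)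
    (t : Fin 2) : diagCoords a (b - a) ![x, y] t ∈ Icc 0 1 := by
  have hc : 0 < 2 * (b - a) := by linarith
  rw [diagCoords_apply]
  fin_cases t <;>
  · simp only [Fin.zero_eta, Fin.mk_one, Matrix.cons_val_zero, Matrix.cons_val_one]
    rw [mem_Icc, le_div_iff₀ hc, div_le_iff₀ hc]
    constructor <;> linarith [hx.1, hx.2, hy.1, hy.2]

/-- `x y = (a + c u)² - c² (v - 1/2)²` for `(u, v) = diagCoords a c (x, y)`. -/
lemma mul_eq_of_diagCoords {a c x y : ℝ} {w : Fin 2 → ℝ} (hc : c ≠ 0)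
    (hw : diagCoords a c ![x, y] = w) :
    x * y = a ^ 2 - c ^ 2 / 4 + 2 * a * c * w 0 + c ^ 2 * w 1 + c ^ 2 * (w 0 ^ 2 - w 1 ^ 2) := by
  rw [← hw, diagCoords_apply]
  simp only [Matrix.cons_val_zero, Matrix.cons_val_one]
  field_simp
  ring

def network (N L : ℕ) (a c : ℝ) (z : Fin 2 → ℝ) : ℝ :=
  readout N a c (c ^ 2 * ((4 * (N : ℝ) ^ 2) ^ L)⁻¹)
    ((step N ∘ relu)^[L] (inputLayer N (diagCoords a c) z))

theorem implementedBy2_network {N : ℕ} (hN : 0 < N) (L : ℕ) (a c : ℝ) :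
    ImplementedBy2 (9 * N + 1) L (fun x y => network N L a c ![x, y]) := by
  have hW : (Fintype.card (Coord N) : ℝ) ≤ 9 * N + 1 := by
    simp only [Fintype.card_prod, Fintype.card_sum, Fintype.card_fin]
    push_cast
    linarith [(by exact_mod_cast hN : (1 : ℝ) ≤ N)]
  have heta : ∀ z : Fin 2 → ℝ, ![z 0, z 1] = z := fun z => by ext i; fin_cases i <;> rfl
  refine ⟨L, le_rfl, ?_⟩
  simpa only [heta, network] using reluNetRec_iterate hW (step N) _ L (inputLayer N (diagCoords a c))

theorem abs_network_sub_mul_le {N : ℕ} (hN : 0 < N) (L : ℕ) {a b x y : ℝ} (hab : a < b)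
    (hx : x ∈ Icc a b) (hy : y ∈ Icc a b) :
    |network N L a (b - a) ![x, y] - x * y| ≤ (b - a) ^ 2 * ((4 * (N : ℝ) ^ 2) ^ L)⁻¹ := by
  set w := diagCoords a (b - a) ![x, y] with hw
  have hw01 := diagCoords_mem_Icc hab hx hy
  have hG t : ((sawtooth N)^[L] (w t)) ^ 2 ≤ 1 :=
    pow_le_one₀ ((mapsTo_sawtooth hN).iterate L (hw01 t)).1 ((mapsTo_sawtooth hN).iterate L (hw01 t)).2
  have herr : network N L a (b - a) ![x, y] - x * y = (b - a) ^ 2 * ((4 * (N : ℝ) ^ 2) ^ L)⁻¹ *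
      (((sawtooth N)^[L] (w 1)) ^ 2 - ((sawtooth N)^[L] (w 0)) ^ 2) := by
    simp only [network, inputLayer_apply, iterate_step_relu_preact hN hw01, readout_preact,
      mul_eq_of_diagCoords (by linarith : b - a ≠ 0) hw.symm, accum]
    field_simp
    ring
  rw [herr, abs_mul, abs_of_nonneg (by positivity)]
  exact mul_le_of_le_one_right (by positivity)
    (abs_sub_le_of_nonneg_of_le (by positivity) (hG 1) (by positivity) (hG 0))

end ProductNet

lemma inv_four_mul_sq_pow_le_rpow_neg {N : ℕ} (hN : 0 < N) (L : ℕ) :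
    ((4 * (N : ℝ) ^ 2) ^ L)⁻¹ ≤ (N : ℝ) ^ (-(L : ℝ)) := by
  have hN1 : (1 : ℝ) ≤ N := by exact_mod_cast hN
  rw [Real.rpow_neg (Nat.cast_nonneg N), Real.rpow_natCast]
  exact inv_anti₀ (by positivity) (pow_le_pow_left₀ (Nat.cast_nonneg N) (by nlinarith) L)

open ProductNet in
theorem relu_approx_product_interval_general
    (N L : ℕ) (hN : 0 < N) (a b : ℝ) (hab : a < b) :
    ∃ φ : ℝ → ℝ → ℝ,
      ImplementedBy2 (9 * (N : ℝ) + 1) (L : ℝ) φ ∧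
      ∀ x ∈ Set.Icc a b, ∀ y ∈ Set.Icc a b,
        |φ x y - x * y| ≤ 6 * (b - a) ^ 2 * (N : ℝ) ^ (-(L : ℝ)) := by
  refine ⟨fun x y => network N L a (b - a) ![x, y], implementedBy2_network hN L a (b - a),
    fun x hx y hy => ?_⟩
  calc _ ≤ (b - a) ^ 2 * ((4 * (N : ℝ) ^ 2) ^ L)⁻¹ := abs_network_sub_mul_le hN L hab hx hy
    _ ≤ (b - a) ^ 2 * (N : ℝ) ^ (-(L : ℝ)) := by gcongr; exact inv_four_mul_sq_pow_le_rpow_neg hN L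
    _ ≤ 6 * (b - a) ^ 2 * (N : ℝ) ^ (-(L : ℝ)) := by
      linarith [(by positivity : 0 ≤ (b - a) ^ 2 * (N : ℝ) ^ (-(L : ℝ)))]

/-- Lemma 4.2: ReLU FNNs of width `9N+1` and depth `L` approximate `xy` on `[a,b]²`
within `6(b-a)² N^{-L}`. -/
theorem relu_approx_product_interval
    (N L : ℕ) (hN : 0 < N) (hL : 0 < L) (a b : ℝ) (hab : a < b) :
    ∃ φ : ℝ → ℝ → ℝ,
      ImplementedBy2 (9 * (N : ℝ) + 1) (L : ℝ) φ ∧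
      ∀ x ∈ Set.Icc a b, ∀ y ∈ Set.Icc a b,
        |φ x y - x * y| ≤ 6 * (b - a) ^ 2 * (N : ℝ) ^ (-(L : ℝ)) :=
  relu_approx_product_interval_general N L hN a b hab
end
end

section
/- The function (x_1, x_2, x_3) ↦ mid(x_1, x_2, x_3) from ℝ³ to ℝ can be implemented exactly by a ReLU FNN with width at most 14 and depth at most 2; that is, there exists a function φ : ℝ³ → ℝ implemented by a ReLU FNN with width at most 14 and depth at most 2 such that φ(x_1,x_2,x_3) = mid(x_1,x_2,x_3) for all x_1, x_2, x_3 ∈ ℝ. -/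
open Real

noncomputable section

/-- the middle (median) value of three reals. -/
def mid (a b c : ℝ) : ℝ := a + b + c - max (max a b) c - min (min a b) c


def midA1 : (Fin 3 → ℝ) → (Fin 8 → ℝ) :=
  fun x => ![x 0, -x 0, x 1, -x 1, x 2, -x 2, x 0 - x 1, x 1 - x 0]

def midA2 : (Fin 8 → ℝ) → (Fin 4 → ℝ) :=
  fun y => ![y 4 - y 5, y 5 - y 4, y 4 - y 5 - y 0 + y 1 - y 7, y 0 - y 1 - y 6 - y 4 + y 5]

def midA3 : (Fin 4 → ℝ) → (Fin 1 → ℝ) :=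
  fun z => ![z 0 - z 1 - z 2 + z 3]

lemma vec8_val4 (a0 a1 a2 a3 a4 a5 a6 a7 : ℝ) :
    ![a0,a1,a2,a3,a4,a5,a6,a7] (4 : Fin 8) = a4 := rfl
lemma vec8_val5 (a0 a1 a2 a3 a4 a5 a6 a7 : ℝ) :
    ![a0,a1,a2,a3,a4,a5,a6,a7] (5 : Fin 8) = a5 := rfl
lemma vec8_val6 (a0 a1 a2 a3 a4 a5 a6 a7 : ℝ) :
    ![a0,a1,a2,a3,a4,a5,a6,a7] (6 : Fin 8) = a6 := rfl
lemma vec8_val7 (a0 a1 a2 a3 a4 a5 a6 a7 : ℝ) :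
    ![a0,a1,a2,a3,a4,a5,a6,a7] (7 : Fin 8) = a7 := rfl

lemma midA1_affine : IsAffineMap 3 8 midA1 := by
  refine ⟨!![1,0,0; -1,0,0; 0,1,0; 0,-1,0; 0,0,1; 0,0,-1; 1,-1,0; -1,1,0], 0, fun x => ?_⟩
  funext i
  fin_cases i <;>
    simp [midA1, Matrix.mulVec, dotProduct, Fin.sum_univ_three] <;> ring

lemma midA2_affine : IsAffineMap 8 4 midA2 := by
  refine ⟨!![0,0,0,0,1,-1,0,0; 0,0,0,0,-1,1,0,0; -1,1,0,0,1,-1,0,-1; 1,-1,0,0,-1,1,-1,0],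
    0, fun x => ?_⟩
  funext i
  fin_cases i <;>
    simp [midA2, Matrix.mulVec, dotProduct, Fin.sum_univ_eight,
      vec8_val4, vec8_val5, vec8_val6, vec8_val7] <;> ring

lemma midA3_affine : IsAffineMap 4 1 midA3 := by
  refine ⟨!![1,-1,-1,1], 0, fun x => ?_⟩
  funext i
  fin_cases i <;>
    simp [midA3, Matrix.mulVec, dotProduct, Fin.sum_univ_four] <;> ring

set_option maxHeartbeats 1000000 in
lemma mid_net_eq (a b c : ℝ) :
    max (max c 0 - max (-c) 0) 0 - max (max (-c) 0 - max c 0) 0 -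
      max (max c 0 - max (-c) 0 - max a 0 + max (-a) 0 - max (b - a) 0) 0 +
      max (max a 0 - max (-a) 0 - max (a - b) 0 - max c 0 + max (-c) 0) 0 = mid a b c := by
  rcases le_total 0 a with h1 | h1 <;> rcases le_total 0 c with h2 | h2 <;>
  rcases le_total a b with h3 | h3 <;> rcases le_total b c with h4 | h4 <;>
  rcases le_total a c with h5 | h5 <;>
    simp [mid, max_def, min_def, h1, h2, h3, h4, h5, sub_nonneg, neg_nonneg] <;>
    first
      | linarith
      | (split_ifs <;> linarith)

/-- Lemma 3.1: `mid(x₁,x₂,x₃)` can be implemented exactly by a ReLU FNN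
with width `14` and depth `2`. -/
theorem relu_implements_mid :
    ∃ φ : (Fin 3 → ℝ) → ℝ,
      ImplementedBy 3 14 2 φ ∧ ∀ x : Fin 3 → ℝ, φ x = mid (x 0) (x 1) (x 2) := by
  refine ⟨fun x => midA3 (fun i => max (midA2 (fun j => max (midA1 x j) 0) i) 0) 0,
    ⟨2, by norm_num, ?_⟩, ?_⟩
  · exact ⟨8, by norm_num, by norm_num, midA1, midA1_affine,
      fun y => midA3 (fun i => max (midA2 y i) 0) 0,
      ⟨4, by norm_num, by norm_num, midA2, midA2_affine,
        fun z => midA3 z 0, ⟨midA3, midA3_affine, fun z => rfl⟩, fun y => rfl⟩,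
      fun x => rfl⟩
  · intro x
    simpa [midA1, midA2, midA3, vec8_val4, vec8_val5, vec8_val6, vec8_val7] using
      mid_net_eq (x 0) (x 1) (x 2)
end
end

section
/- Let ε > 0, K ∈ ℕ+, δ ∈ (0, 1/(3K)], let f ∈ C([0,1]), and let g : ℝ → ℝ be any function with |g(x) − f(x)| ≤ ε for every x ∈ [0,1] \ Ω([0,1], K, δ). Define φ(x) := mid(g(x−δ), g(x), g(x+δ)) for x ∈ ℝ. Then |φ(x) − f(x)| ≤ ε + ω_f(δ) for every x ∈ [0,1]. -/
noncomputable section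

/-- the one-dimensional trifling region `Ω([0,1], K, δ)`. -/
def trifling1 (K : ℕ) (δ : ℝ) : Set ℝ :=
  {x | x ∈ Set.Icc (0 : ℝ) 1 ∧ ∃ k : ℕ, 1 ≤ k ∧ k ≤ K - 1 ∧
        x ∈ Set.Ioo ((k : ℝ) / K - δ) ((k : ℝ) / K)}

/-- the modulus of continuity of `f` on `[0,1]`. -/
def modCont1 (f : ℝ → ℝ) (r : ℝ) : ℝ :=
  sSup {t | ∃ x ∈ Set.Icc (0 : ℝ) 1, ∃ y ∈ Set.Icc (0 : ℝ) 1, |x - y| ≤ r ∧ t = |f x - f y|}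

lemma mid_bound {a b c lo hi : ℝ}
    (h : (lo ≤ a ∧ a ≤ hi) ∧ (lo ≤ b ∧ b ≤ hi) ∨
         (lo ≤ a ∧ a ≤ hi) ∧ (lo ≤ c ∧ c ≤ hi) ∨
         (lo ≤ b ∧ b ≤ hi) ∧ (lo ≤ c ∧ c ≤ hi)) :
    lo ≤ mid a b c ∧ mid a b c ≤ hi := by
  simp only [mid, max_def, min_def]
  rcases h with ⟨⟨h1,h2⟩,⟨h3,h4⟩⟩|⟨⟨h1,h2⟩,⟨h3,h4⟩⟩|⟨⟨h1,h2⟩,⟨h3,h4⟩⟩ <;>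
    split_ifs <;> constructor <;> linarith

/-- auxiliary: "bad" point predicate. -/
def Bad1 (K : ℕ) (δ : ℝ) (p : ℝ) : Prop :=
  ∃ k : ℕ, 1 ≤ k ∧ k ≤ K - 1 ∧ (k : ℝ) / K - δ < p ∧ p < (k : ℝ) / K

lemma bad_range {K : ℕ} (hK : 0 < K) {δ p : ℝ} (hδ0 : 0 < δ) (hδ1 : 3 * δ ≤ 1 / K)
    (h : Bad1 K δ p) : 2 * δ < p ∧ p < 1 - 3 * δ := by
  obtain ⟨k, hk1, hk2, hlt, hlt'⟩ := h
  have hKR : (0 : ℝ) < K := by exact_mod_cast hK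
  have hK2 : 2 ≤ K := by omega
  have hkR : (1 : ℝ) ≤ k := by exact_mod_cast hk1
  have hkR' : (k : ℝ) ≤ K - 1 := by
    have : (k : ℝ) ≤ ((K - 1 : ℕ) : ℝ) := by exact_mod_cast hk2
    rw [Nat.cast_sub (by omega)] at this; simpa using this
  have h1 : 1 / (K : ℝ) ≤ (k : ℝ) / K := by gcongr
  have h2 : (k : ℝ) / K ≤ ((K : ℝ) - 1) / K := by gcongr
  have h3 : ((K : ℝ) - 1) / K = 1 - 1 / K := by field_simp
  constructor
  · nlinarith
  · rw [h3] at h2; nlinarith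

lemma no_two_bad {K : ℕ} (hK : 0 < K) {δ p q : ℝ} (hδ0 : 0 < δ) (hδ1 : 3 * δ ≤ 1 / K)
    (hp : Bad1 K δ p) (hq : Bad1 K δ q) (h1 : δ ≤ q - p) (h2 : q - p ≤ 2 * δ) : False := by
  obtain ⟨k1, hk11, hk12, hp1, hp2⟩ := hp
  obtain ⟨k2, hk21, hk22, hq1, hq2⟩ := hq
  have hKR : (0 : ℝ) < K := by exact_mod_cast hK
  rcases lt_trichotomy k1 k2 with h | h | h
  · have : (k1 : ℝ) + 1 ≤ k2 := by exact_mod_cast h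
    have hd : 1 / (K : ℝ) ≤ (k2 : ℝ) / K - (k1 : ℝ) / K := by
      rw [div_sub_div_same]; gcongr; linarith
    nlinarith
  · subst h; linarith
  · have : (k2 : ℝ) + 1 ≤ k1 := by exact_mod_cast h
    have hd : 1 / (K : ℝ) ≤ (k1 : ℝ) / K - (k2 : ℝ) / K := by
      rw [div_sub_div_same]; gcongr; linarith
    nlinarith

/-- Lemma 3.3: from an approximation valid outside the trifling region, the median of
three shifted copies gives an approximation valid on all of `[0,1]`. -/
theorem mid_shift_extension_one_dim
    (ε : ℝ) (hε : 0 < ε) (K : ℕ) (hK : 0 < K)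
    (δ : ℝ) (hδ0 : 0 < δ) (hδ1 : δ ≤ 1 / (3 * K))
    (f : ℝ → ℝ) (hf : ContinuousOn f (Set.Icc 0 1))
    (g : ℝ → ℝ) (hg : ∀ x ∈ Set.Icc (0 : ℝ) 1 \ trifling1 K δ, |g x - f x| ≤ ε) :
    ∀ x ∈ Set.Icc (0 : ℝ) 1,
      |mid (g (x - δ)) (g x) (g (x + δ)) - f x| ≤ ε + modCont1 f δ := by
  have hKR : (0 : ℝ) < K := by exact_mod_cast hK
  have hδ1' : 3 * δ ≤ 1 / K := by
    rw [le_div_iff₀ (by positivity)] at hδ1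
    rw [le_div_iff₀ hKR]; linarith
  -- modulus of continuity bound
  obtain ⟨C, hC⟩ := (isCompact_Icc (a := (0:ℝ)) (b := 1)).exists_bound_of_continuousOn hf
  have hbdd : BddAbove {t | ∃ x ∈ Set.Icc (0 : ℝ) 1, ∃ y ∈ Set.Icc (0 : ℝ) 1,
      |x - y| ≤ δ ∧ t = |f x - f y|} := by
    refine ⟨2 * C, ?_⟩
    rintro t ⟨x, hx, y, hy, -, rfl⟩
    have h1 := hC x hx
    have h2 := hC y hy
    calc |f x - f y| ≤ ‖f x‖ + ‖f y‖ := by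
          simpa [Real.norm_eq_abs] using norm_sub_le (f x) (f y)
      _ ≤ 2 * C := by linarith
  have hmod : ∀ p ∈ Set.Icc (0 : ℝ) 1, ∀ x ∈ Set.Icc (0 : ℝ) 1, |p - x| ≤ δ →
      |f p - f x| ≤ modCont1 f δ := by
    intro p hp x hx hpx
    exact le_csSup hbdd ⟨p, hp, x, hx, hpx, rfl⟩
  intro x hx
  obtain ⟨hx0, hx1⟩ := hx
  -- good points give the two-sided bound
  set M := ε + modCont1 f δ with hM
  have hgood : ∀ p, p ∈ Set.Icc (0 : ℝ) 1 → ¬ Bad1 K δ p → |p - x| ≤ δ →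
      f x - M ≤ g p ∧ g p ≤ f x + M := by
    intro p hp hnb hpx
    have hpt : p ∈ Set.Icc (0 : ℝ) 1 \ trifling1 K δ := by
      refine ⟨hp, fun ht => hnb ?_⟩
      obtain ⟨-, k, hk1, hk2, hk3, hk4⟩ := ht
      exact ⟨k, hk1, hk2, hk3, hk4⟩
    have h1 := hg p hpt
    have h2 := hmod p hp x ⟨hx0, hx1⟩ hpx
    rw [abs_le] at h1 h2
    constructor <;> [nlinarith; nlinarith]
  -- case analysis on which point is good
  have hBl := fun h => bad_range hK hδ0 hδ1' (p := x - δ) h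
  have hBm := fun h => bad_range hK hδ0 hδ1' (p := x) h
  have hBr := fun h => bad_range hK hδ0 hδ1' (p := x + δ) h
  have key : (f x - M ≤ g (x - δ) ∧ g (x - δ) ≤ f x + M) ∧ (f x - M ≤ g x ∧ g x ≤ f x + M) ∨
      (f x - M ≤ g (x - δ) ∧ g (x - δ) ≤ f x + M) ∧
        (f x - M ≤ g (x + δ) ∧ g (x + δ) ≤ f x + M) ∨
      (f x - M ≤ g x ∧ g x ≤ f x + M) ∧ (f x - M ≤ g (x + δ) ∧ g (x + δ) ≤ f x + M) := by
    by_cases hm : Bad1 K δ x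
    · -- x bad: then x-δ and x+δ are good
      have hr := hBm hm
      refine Or.inr (Or.inl ⟨?_, ?_⟩)
      · refine hgood _ ⟨by linarith [hr.1], by linarith⟩ (fun hb => ?_)
          (by rw [abs_le]; constructor <;> linarith)
        exact no_two_bad hK hδ0 hδ1' hb hm (by linarith) (by linarith)
      · refine hgood _ ⟨by linarith, by linarith [hr.2]⟩ (fun hb => ?_)
          (by rw [abs_le]; constructor <;> linarith)
        exact no_two_bad hK hδ0 hδ1' hm hb (by linarith) (by linarith)
    · -- x good; need one of x-δ, x+δ good too
      have hxg : f x - M ≤ g x ∧ g x ≤ f x + M :=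
        hgood x ⟨hx0, hx1⟩ hm (by simp [abs_of_nonpos, le_of_lt hδ0])
      by_cases hl : Bad1 K δ (x - δ)
      · -- x-δ bad ⇒ x+δ good
        have hr := hBl hl
        refine Or.inr (Or.inr ⟨hxg, ?_⟩)
        refine hgood _ ⟨by linarith [hr.1], by linarith [hr.2]⟩ (fun hb => ?_)
          (by rw [abs_le]; constructor <;> linarith)
        exact no_two_bad hK hδ0 hδ1' hl hb (by linarith) (by linarith)
      · -- x-δ good; is it in [0,1]?
        by_cases hin : 0 ≤ x - δ
        · exact Or.inl ⟨hgood _ ⟨hin, by linarith⟩ hl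
            (by rw [abs_le]; constructor <;> linarith), hxg⟩
        · -- x < δ, so x+δ < 2δ ≤ 1 and x+δ not bad
          push_neg at hin
          refine Or.inr (Or.inr ⟨hxg, ?_⟩)
          refine hgood _ ⟨by linarith, ?_⟩ (fun hb => ?_)
            (by rw [abs_le]; constructor <;> linarith)
          · have hK1 : (1 : ℝ) ≤ K := by exact_mod_cast hK
            have hKone : 1 / (K : ℝ) ≤ 1 := by rw [div_le_one hKR]; exact hK1
            linarith
          · have := (hBr hb).1; linarith
  have := mid_bound (a := g (x - δ)) (b := g x) (c := g (x + δ))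
    (lo := f x - M) (hi := f x + M) key
  rw [abs_le]; constructor <;> linarith [this.1, this.2]
end
end
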